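/- arXiv:0712.4124 — 7 statements merged into one kernel-verified Lean document; each statement's English description precedes it below -/
import Mathlib

section
/- (Cyclic Vector Theorem) Let (k, ∂) be a differential field of characteristic zero containing an element a with ∂a ≠ 0. Let M be a k-vector space of finite dimension n ≥ 1 equipped with an additive map D : M → M satisfying D(f·m) = ∂(f)·m + f·D(m) for all f ∈ k, m ∈ M. Then there exists m ∈ M such that m, D(m), D²(m), …, D^{n−1}(m) form a k-basis of M. -/
/-!
Rescaling `∂` and `D` by `(∂a)⁻¹` we may assume `∂t = 1` for some `t`, so that
`D^[j+1] (t • x) = t • D^[j+1] x + (j+1) • D^[j] x`. We grow a vector with `r` independent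
iterates until `r = n`. Suppose `u = (m, …, D^[r-1] m)` is independent, `r < n`, but no vector has
`r + 1` independent iterates. Choose `y ∉ span u` and an alternating form `φ` with
`φ (u, y) = 1`. For every constant `c` and every `x`, the family `(D^[i] (m + c • x))_{i ≤ r}` is
dependent, so `φ` kills it; as a polynomial in `c` vanishing on `ℚ` this has zero linear part:
`∑ i, ℓ i (D^[i] x) = 0` for all `x`, where `ℓ i` is `φ` with the `i`-th slot of
`(m, …, D^[r] m)` left free. Substituting `t • x` gives the same relation for
`ℓ' i = (i + 1) • ℓ (i + 1)`, and after `r` steps `r! • ℓ r = 0`, contradicting `ℓ r y = 1`.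
-/

open Module Submodule Set

theorem MultilinearMap.map_add_smul_eq_sum {R ι : Type*} {M₁ : ι → Type*} {M₂ : Type*}
    [CommSemiring R] [∀ i, AddCommMonoid (M₁ i)] [AddCommMonoid M₂] [∀ i, Module R (M₁ i)]
    [Module R M₂] [DecidableEq ι] [Fintype ι] (f : MultilinearMap R M₁ M₂) (v w : ∀ i, M₁ i)
    (c : R) : f (v + c • w) = ∑ s : Finset ι, c ^ s.card • f (s.piecewise w v) := by
  rw [add_comm, f.map_add_univ]
  refine Finset.sum_congr rfl fun s _ => ?_
  rw [← Finset.prod_const, ← f.map_piecewise_smul]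
  congr 1
  ext i
  by_cases hi : i ∈ s <;> simp [hi]

open Polynomial in
theorem MultilinearMap.linearDeriv_eq_zero_of_infinite {R ι : Type*} {M₁ : ι → Type*}
    [CommRing R] [IsDomain R] [∀ i, AddCommMonoid (M₁ i)] [∀ i, Module R (M₁ i)]
    [DecidableEq ι] [Fintype ι] (f : MultilinearMap R M₁ R) (v w : ∀ i, M₁ i) {S : Set R}
    (hS : S.Infinite) (h : ∀ c ∈ S, f (v + c • w) = 0) : f.linearDeriv v w = 0 := by
  set p : R[X] := ∑ s : Finset ι, C (f (s.piecewise w v)) * X ^ s.card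
  have hp : p = 0 := by
    refine eq_zero_of_infinite_isRoot p (hS.mono fun c hc => ?_)
    change eval c p = 0
    simp only [p, eval_finsetSum, eval_mul, eval_C, eval_pow, eval_X]
    rw [← h c hc, f.map_add_smul_eq_sum]
    simp only [smul_eq_mul, mul_comm]
  have hcoeff : p.coeff 1 = f.linearDeriv v w := by
    simp only [p, finsetSum_coeff, coeff_C_mul_X_pow, linearDeriv_apply, ← Finset.sum_filter,
      eq_comm (a := 1)]
    rw [← Finset.powerset_univ, ← Finset.powersetCard_eq_filter, Finset.powersetCard_one,
      Finset.sum_map]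
    simp [Finset.piecewise_singleton]
  rw [← hcoeff, hp, coeff_zero]

theorem span_range_fin_mono {k M : Type*} [Semiring k] [AddCommMonoid M] [Module k M] (v : ℕ → M)
    {i j : ℕ} (hij : i ≤ j) :
    span k (range fun l : Fin i => v l) ≤ span k (range fun l : Fin j => v l) :=
  span_mono <| by rintro _ ⟨l, rfl⟩; exact ⟨Fin.castLE hij l, rfl⟩

theorem LinearIndependent.exists_alternatingMap_eq_one {K M ι : Type*} [Field K] [AddCommGroup M]
    [Module K M] [Fintype ι] [DecidableEq ι] {v : ι → M} (hv : LinearIndependent K v) :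
    ∃ φ : M [⋀^ι]→ₗ[K] K, φ v = 1 := by
  obtain ⟨P, hP⟩ := (span K (range v)).subtype.exists_leftInverse_of_injective (ker_subtype _)
  refine ⟨(Basis.span hv).det.compLinearMap P, ?_⟩
  have hPv : P ∘ v = Basis.span hv := funext fun i => by
    simpa [Basis.span_apply] using LinearMap.congr_fun hP (Basis.span hv i)
  show (Basis.span hv).det (P ∘ v) = 1
  rw [hPv, Basis.det_self]

theorem infinite_setOf_deriv_eq_zero {k : Type*} [Field k] [CharZero k] (d : k → k)
    (hadd : ∀ a b : k, d (a + b) = d a + d b)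
    (hmul : ∀ a b : k, d (a * b) = d a * b + a * d b) : {c : k | d c = 0}.Infinite := by
  let δ : Derivation ℚ k k := Derivation.mk' (AddMonoidHom.mk' d hadd).toRatLinearMap
    fun a b => by simp [hmul, add_comm, mul_comm]
  refine (Set.infinite_range_of_injective (Rat.cast_injective (α := k))).mono ?_
  rintro _ ⟨q, rfl⟩
  exact (by simpa using δ.map_algebraMap q : δ q = 0)

section
variable {k M : Type*} [Field k] [AddCommGroup M] [Module k M] (d : k → k) (D : M →+ M)
  (hD : ∀ (f : k) (m : M), D (f • m) = d f • m + f • D m)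
include hD

theorem iterate_smul_of_deriv_eq_zero {c : k} (hc : d c = 0) (j : ℕ) (x : M) :
    D^[j] (c • x) = c • D^[j] x := by
  induction j generalizing x with
  | zero => rfl
  | succ j ih =>
    rw [Function.iterate_succ_apply', ih, hD, hc, zero_smul, zero_add, Function.iterate_succ_apply']

theorem iterate_succ_smul_of_deriv_eq_one {t : k} (ht : d t = 1) (j : ℕ) (x : M) :
    D^[j + 1] (t • x) = t • D^[j + 1] x + (j + 1) • D^[j] x := by
  induction j with
  | zero => simp [hD, ht, add_comm]
  | succ j ih =>
    rw [Function.iterate_succ_apply', ih, map_add, hD, ht, one_smul, map_nsmul,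
      ← Function.iterate_succ_apply' D, ← Function.iterate_succ_apply' D]
    module

theorem apply_last_eq_zero_of_sum_apply_iterate_eq_zero [CharZero k] {t : k} (ht : d t = 1)
    {N : ℕ} (ℓ : Fin (N + 1) → M →ₗ[k] k) (h : ∀ x, ∑ i, ℓ i (D^[i] x) = 0) :
    ℓ (Fin.last N) = 0 := by
  induction N with
  | zero => ext x; simpa using h x
  | succ N ih =>
    have hℓ' : ∀ x, ∑ i : Fin (N + 1), ((i + 1 : ℕ) • ℓ i.succ) (D^[i] x) = 0 := fun x => by
      have h₀ := h x
      have h₁ := h (t • x)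
      simp only [Fin.sum_univ_succ (n := N + 1), Fin.val_succ, Fin.val_zero,
        Function.iterate_zero_apply, iterate_succ_smul_of_deriv_eq_one d D hD ht, map_add, map_smul, map_nsmul,
        Finset.sum_add_distrib, smul_eq_mul, nsmul_eq_mul, ← Finset.mul_sum, Nat.cast_add,
        Nat.cast_one] at h₀ h₁
      simp only [LinearMap.smul_apply, nsmul_eq_mul, Nat.cast_add, Nat.cast_one]
      linear_combination h₁ - t * h₀
    simpa using ih (fun i => (i + 1 : ℕ) • ℓ i.succ) hℓ'

theorem apply_mem_span_range_iterate {m x : M} {i : ℕ}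
    (hx : x ∈ span k (range fun l : Fin i => D^[l] m)) :
    D x ∈ span k (range fun l : Fin (i + 1) => D^[l] m) := by
  induction hx using span_induction with
  | mem x hx =>
    obtain ⟨l, rfl⟩ := hx
    exact subset_span ⟨l.succ, Function.iterate_succ_apply' _ _ _⟩
  | zero => simp
  | add x y _ _ hx hy => simpa using add_mem hx hy
  | smul f x hx₀ hx =>
    rw [hD]
    exact add_mem (smul_mem _ _ (span_range_fin_mono (D^[·] m) i.le_succ hx₀)) (smul_mem _ _ hx)

theorem iterate_smul_mem_span_range_iterate (c : k) (m : M) (i : ℕ) :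
    (c • D)^[i] m ∈ span k (range fun l : Fin (i + 1) => D^[l] m) := by
  induction i with
  | zero => exact subset_span ⟨0, rfl⟩
  | succ i ih =>
    rw [Function.iterate_succ_apply']
    exact smul_mem _ c (apply_mem_span_range_iterate d D hD ih)

theorem span_range_iterate_smul_le (c : k) (m : M) (n : ℕ) :
    span k (range fun i : Fin n => (c • D)^[i] m) ≤ span k (range fun i : Fin n => D^[i] m) :=
  span_le.2 <| by
    rintro _ ⟨i, rfl⟩
    exact span_range_fin_mono (D^[·] m) i.isLt (iterate_smul_mem_span_range_iterate d D hD c m i)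

theorem exists_linearIndependent_iterate_succ [CharZero k] [FiniteDimensional k M]
    (hconst : {c : k | d c = 0}.Infinite) {t : k} (ht : d t = 1) {r : ℕ}
    (hr : r < finrank k M) {m : M} (hm : LinearIndependent k fun i : Fin r => D^[i] m) :
    ∃ m' : M, LinearIndependent k fun i : Fin (r + 1) => D^[i] m' := by
  by_contra! hdep
  obtain ⟨y, hy⟩ : ∃ y, y ∉ span k (range fun i : Fin r => D^[i] m) := by
    by_contra! hspan
    have := finrank_span_eq_card hm
    rw [eq_top_iff'.2 hspan, finrank_top, Fintype.card_fin] at this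
    omega
  obtain ⟨φ, hφ⟩ := (linearIndependent_finSnoc.2 ⟨hm, hy⟩).exists_alternatingMap_eq_one
  set u : Fin (r + 1) → M := fun i => D^[i] m
  have hderiv (x : M) : φ.toMultilinearMap.linearDeriv u (fun i => D^[i] x) = 0 :=
    φ.toMultilinearMap.linearDeriv_eq_zero_of_infinite _ _ hconst fun c hc => by
      refine (congrArg φ (funext fun i => ?_)).trans (φ.map_linearDependent _ (hdep (m + c • x)))
      simp [u, iterate_map_add, iterate_smul_of_deriv_eq_zero d D hD hc]
  have hlast := apply_last_eq_zero_of_sum_apply_iterate_eq_zero d D hD ht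
    (fun i => φ.toMultilinearMap.toLinearMap u i) (by simpa using hderiv)
  have hupdate : Function.update u (Fin.last r) y = Fin.snoc (fun i : Fin r => D^[i] m) y := by
    rw [← Fin.snoc_init_self u, Fin.update_snoc_last]
    rfl
  simpa [hupdate, hφ] using LinearMap.congr_fun hlast y

theorem exists_linearIndependent_iterate [CharZero k] [FiniteDimensional k M]
    (hconst : {c : k | d c = 0}.Infinite) {t : k} (ht : d t = 1) :
    ∃ m : M, LinearIndependent k fun i : Fin (finrank k M) => D^[i] m := by
  suffices ∀ r ≤ finrank k M, ∃ m : M, LinearIndependent k fun i : Fin r => D^[i] m from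
    this _ le_rfl
  intro r hr
  induction r with
  | zero => exact ⟨0, linearIndependent_empty_type⟩
  | succ r ih =>
    obtain ⟨m, hm⟩ := ih (by omega)
    exact exists_linearIndependent_iterate_succ d D hD hconst ht hr hm

end

theorem cyclic_vector_theorem_general
    (k : Type*) [Field k] [CharZero k] (d : k → k)
    (hadd : ∀ a b : k, d (a + b) = d a + d b)
    (hmul : ∀ a b : k, d (a * b) = d a * b + a * d b)
    (a : k) (ha : d a ≠ 0)
    (M : Type*) [AddCommGroup M] [Module k M] [FiniteDimensional k M]
    (n : ℕ) (hdim : Module.finrank k M = n)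
    (D : M → M)
    (hDadd : ∀ x y : M, D (x + y) = D x + D y)
    (hLeibniz : ∀ (f : k) (m : M), D (f • m) = d f • m + f • D m) :
    ∃ m : M, LinearIndependent k (fun i : Fin n => D^[(i : ℕ)] m) ∧
      Submodule.span k (Set.range fun i : Fin n => D^[(i : ℕ)] m) = ⊤ := by
  subst hdim
  let D₀ : M →+ M := AddMonoidHom.mk' D hDadd
  have hD₀ : ∀ (f : k) (m : M), D₀ (f • m) = d f • m + f • D₀ m := hLeibniz
  set c := (d a)⁻¹
  have hcD₀ (f : k) (m : M) : (c • D₀) (f • m) = (c * d f) • m + f • (c • D₀) m := by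
    simp [hD₀, smul_smul, mul_comm c f]
  obtain ⟨m, hm⟩ := exists_linearIndependent_iterate (c * d ·) (c • D₀) hcD₀
    ((infinite_setOf_deriv_eq_zero d hadd hmul).mono fun _ => mul_eq_zero_of_right c) (inv_mul_cancel₀ ha)
  have hspan : span k (range fun i : Fin (finrank k M) => D^[i] m) = ⊤ :=
    top_unique <| (hm.span_eq_top_of_card_eq_finrank' (Fintype.card_fin _)).ge.trans
      (span_range_iterate_smul_le d D₀ hD₀ c m _)
  exact ⟨m, linearIndependent_of_top_le_span_of_card_eq_finrank hspan.ge (Fintype.card_fin _),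
    hspan⟩

/-- Cyclic Vector Theorem: a differential module of dimension `n ≥ 1` over a
differential field `(k, ∂)` of characteristic zero containing an element `a` with
`da ≠ 0` has a cyclic vector, i.e. an element `m` such that
`m, D m, …, D^[n-1] m` is a `k`-basis of `M`. -/
theorem cyclic_vector_theorem
    (k : Type*) [Field k] [CharZero k] (d : k → k)
    (hadd : ∀ a b : k, d (a + b) = d a + d b)
    (hmul : ∀ a b : k, d (a * b) = d a * b + a * d b)
    (a : k) (ha : d a ≠ 0)
    (M : Type*) [AddCommGroup M] [Module k M] [FiniteDimensional k M]
    (n : ℕ) (hn : 1 ≤ n) (hdim : Module.finrank k M = n)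
    (D : M → M)
    (hDadd : ∀ x y : M, D (x + y) = D x + D y)
    (hLeibniz : ∀ (f : k) (m : M), D (f • m) = d f • m + f • D m) :
    ∃ m : M, LinearIndependent k (fun i : Fin n => D^[(i : ℕ)] m) ∧
      Submodule.span k (Set.range fun i : Fin n => D^[(i : ℕ)] m) = ⊤ :=
  cyclic_vector_theorem_general k d hadd hmul a ha M n hdim D hDadd hLeibniz
end

section
/- Let r > 0 and let A be an n×n matrix whose entries are complex-analytic functions on the disk D = {z ∈ ℂ : |z| < r}. Then there exist 0 < ρ ≤ r and a function Y from {|z| < ρ} to the n×n complex matrices, analytic on that disk (entrywise), such that Y(0) is the identity matrix, Y′(z) = A(z)·Y(z) for all |z| < ρ (entrywise complex derivative), and Y(z) is an invertible matrix for every |z| < ρ. -/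
/-!
Write `A z = ∑ aⱼ zʲ`. Comparing coefficients in `Y' = A Y`, `Y 0 = 1` forces
`(k + 1) cₖ₊₁ = ∑_{j ≤ k} aⱼ cₖ₋ⱼ`; if `‖aⱼ‖ ≤ M ^ (j + 1)` this recursion gives `‖cₖ‖ ≤ ‖1‖ Mᵏ`,
so the formal solution converges on the disk of radius `1 / M`, where termwise differentiation and
the Cauchy product show that it solves the equation. As `Y 0 = 1` and the units of a complete
normed ring form an open set, `Y z` stays invertible on a smaller disk.
-/

open Finset Metric
open scoped NNReal ENNReal Topology

variable {𝕜 E : Type*} [RCLike 𝕜] [NormedRing E] [NormedAlgebra 𝕜 E]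

variable (𝕜) in
noncomputable def odeCoeff (a : ℕ → E) : ℕ → E
  | 0 => 1
  | k + 1 => ((k : 𝕜) + 1)⁻¹ • ∑ j ∈ range (k + 1), a j * odeCoeff a (k - j)
  decreasing_by exact Nat.lt_succ_of_le (Nat.sub_le k j)

@[simp]
lemma odeCoeff_zero (a : ℕ → E) : odeCoeff 𝕜 a 0 = 1 := by
  rw [odeCoeff]

lemma succ_smul_odeCoeff_succ (a : ℕ → E) (k : ℕ) :
    ((k : 𝕜) + 1) • odeCoeff 𝕜 a (k + 1) = ∑ j ∈ range (k + 1), a j * odeCoeff 𝕜 a (k - j) := by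
  rw [odeCoeff, smul_smul, mul_inv_cancel₀ (Nat.cast_add_one_ne_zero k), one_smul]

lemma norm_odeCoeff_le {a : ℕ → E} {M : ℝ} (ha : ∀ j, ‖a j‖ ≤ M ^ (j + 1)) (k : ℕ) :
    ‖odeCoeff 𝕜 a k‖ ≤ ‖(1 : E)‖ * M ^ k := by
  have hM : 0 ≤ M := (norm_nonneg _).trans (by simpa using ha 0)
  induction k using Nat.strong_induction_on with
  | _ k ih =>
    rcases k with _ | k
    · simp
    have hterm : ∀ j ∈ range (k + 1),
        ‖a j * odeCoeff 𝕜 a (k - j)‖ ≤ ‖(1 : E)‖ * M ^ (k + 1) := by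
      intro j hj
      have hjk : j + 1 + (k - j) = k + 1 := by grind
      calc ‖a j * odeCoeff 𝕜 a (k - j)‖ ≤ M ^ (j + 1) * (‖(1 : E)‖ * M ^ (k - j)) :=
            (norm_mul_le _ _).trans
              (mul_le_mul (ha j) (ih _ (by omega)) (norm_nonneg _) (by positivity))
        _ = ‖(1 : E)‖ * M ^ (k + 1) := by rw [mul_left_comm, ← pow_add, hjk]
    have hk : ((k : ℝ) + 1) * ‖odeCoeff 𝕜 a (k + 1)‖
        ≤ ((k : ℝ) + 1) * (‖(1 : E)‖ * M ^ (k + 1)) :=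
      calc ((k : ℝ) + 1) * ‖odeCoeff 𝕜 a (k + 1)‖
          = ‖((k : 𝕜) + 1) • odeCoeff 𝕜 a (k + 1)‖ := by
            rw [norm_smul]
            norm_cast
        _ = ‖∑ j ∈ range (k + 1), a j * odeCoeff 𝕜 a (k - j)‖ := by
            rw [succ_smul_odeCoeff_succ]
        _ ≤ ∑ j ∈ range (k + 1), ‖(1 : E)‖ * M ^ (k + 1) :=
            (norm_sum_le _ _).trans (sum_le_sum hterm)
        _ = ((k : ℝ) + 1) * (‖(1 : E)‖ * M ^ (k + 1)) := by simp
    exact le_of_mul_le_mul_left hk (by positivity)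

variable (𝕜) in
noncomputable def odeSeries (a : ℕ → E) : FormalMultilinearSeries 𝕜 𝕜 E :=
  fun k => ContinuousMultilinearMap.mkPiRing 𝕜 (Fin k) (odeCoeff 𝕜 a k)

@[simp]
lemma coeff_odeSeries (a : ℕ → E) (k : ℕ) : (odeSeries 𝕜 a).coeff k = odeCoeff 𝕜 a k := by
  simp [odeSeries, FormalMultilinearSeries.coeff]

lemma inv_le_radius_odeSeries {a : ℕ → E} {M : ℝ≥0} (hM : 0 < M)
    (ha : ∀ j, ‖a j‖ ≤ (M : ℝ) ^ (j + 1)) : ((M⁻¹ : ℝ≥0) : ℝ≥0∞) ≤ (odeSeries 𝕜 a).radius := by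
  refine (odeSeries 𝕜 a).le_radius_of_bound ‖(1 : E)‖ fun k => ?_
  rw [FormalMultilinearSeries.norm_apply_eq_norm_coef, coeff_odeSeries]
  calc ‖odeCoeff 𝕜 a k‖ * ((M⁻¹ : ℝ≥0) : ℝ) ^ k ≤ ‖(1 : E)‖ * (M : ℝ) ^ k * (M : ℝ)⁻¹ ^ k := by
        push_cast
        gcongr
        exact norm_odeCoeff_le ha k
    _ = ‖(1 : E)‖ := by
        rw [mul_assoc, ← mul_pow, mul_inv_cancel₀ (by positivity), one_pow, mul_one]

lemma FormalMultilinearSeries.exists_norm_coeff_le_pow_succ {F : Type*} [NormedAddCommGroup F]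
    [NormedSpace 𝕜 F] (p : FormalMultilinearSeries 𝕜 𝕜 F) (hp : 0 < p.radius) :
    ∃ M : ℝ≥0, 0 < M ∧ ∀ n, ‖p.coeff n‖ ≤ (M : ℝ) ^ (n + 1) := by
  obtain ⟨r, hr0, hr⟩ := ENNReal.lt_iff_exists_nnreal_btwn.mp hp
  obtain ⟨C, hC, hpC⟩ := p.norm_le_div_pow_of_pos_of_lt_radius (mod_cast hr0) hr
  refine ⟨max C.toNNReal r⁻¹, lt_max_of_lt_left (by simpa using hC), fun n => ?_⟩
  rw [← p.norm_apply_eq_norm_coef, pow_succ']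
  calc ‖p n‖ ≤ C * (r : ℝ)⁻¹ ^ n := by simpa [div_eq_mul_inv] using hpC n
    _ ≤ _ := by
      push_cast
      gcongr
      · exact le_max_of_le_left (Real.le_coe_toNNReal C)
      · exact le_max_right _ _

lemma radius_odeSeries_coeff_pos {p : FormalMultilinearSeries 𝕜 𝕜 E} (hp : 0 < p.radius) :
    0 < (odeSeries 𝕜 p.coeff).radius := by
  obtain ⟨M, hM, ha⟩ := p.exists_norm_coeff_le_pow_succ hp
  exact lt_of_lt_of_le (by simpa using hM) (inv_le_radius_odeSeries hM ha)

theorem FormalMultilinearSeries.hasDerivAt_sum {F : Type*} [NormedAddCommGroup F]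
    [NormedSpace 𝕜 F] [CompleteSpace F] (p : FormalMultilinearSeries 𝕜 𝕜 F) {z : 𝕜}
    (hz : ‖z‖ₑ < p.radius) :
    HasDerivAt p.sum (∑' n, z ^ n • (n + 1) • p.coeff (n + 1)) z := by
  convert (p.hasFDerivAt_sum hz).hasDerivAt using 1
  have hsum := p.derivSeries.summable (x := z)
    (by simpa using hz.trans_le p.radius_le_radius_derivSeries)
  have happly := (ContinuousLinearMap.apply 𝕜 F (1 : 𝕜)).map_tsum hsum
  simp only [ContinuousLinearMap.apply_apply] at happly
  rw [FormalMultilinearSeries.sum, happly]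
  simp

lemma tsum_pow_smul_mul_tsum_pow_smul [CompleteSpace E] {u v : ℕ → E} {z : 𝕜}
    (hu : Summable fun k => ‖z ^ k • u k‖) (hv : Summable fun k => ‖z ^ k • v k‖) :
    (∑' k, z ^ k • u k) * (∑' k, z ^ k • v k)
      = ∑' k, z ^ k • ∑ j ∈ range (k + 1), u j * v (k - j) := by
  rw [tsum_mul_tsum_eq_tsum_sum_antidiagonal_of_summable_norm hu hv]
  refine tsum_congr fun k => ?_
  rw [Nat.sum_antidiagonal_eq_sum_range_succ_mk, smul_sum]
  refine sum_congr rfl fun j hj => ?_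
  rw [smul_mul_smul_comm, ← pow_add, Nat.add_sub_cancel' (mem_range_succ_iff.mp hj)]

theorem AnalyticAt.exists_hasDerivAt_eq_mul [CompleteSpace E] {A : 𝕜 → E}
    (hA : AnalyticAt 𝕜 A 0) :
    ∃ ρ > 0, ∃ Y : 𝕜 → E, Y 0 = 1 ∧ ∀ z ∈ ball (0 : 𝕜) ρ, HasDerivAt Y (A z * Y z) z := by
  obtain ⟨pA, rA, hpA⟩ := hA
  set p := odeSeries 𝕜 pA.coeff
  have hp : 0 < p.radius := radius_odeSeries_coeff_pos (hpA.r_pos.trans_le hpA.r_le)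
  obtain ⟨ρ, hρ0, hρ⟩ := ENNReal.lt_iff_exists_nnreal_btwn.mp (lt_min hpA.r_pos hp)
  refine ⟨ρ, mod_cast hρ0, p.sum, ?_, fun z hz => ?_⟩
  · rw [FormalMultilinearSeries.sum, tsum_eq_single 0 fun n hn => by simp [hn]]
    simp [p]
  have hzρ : ‖z‖ₑ < ρ := by
    have : ‖z‖₊ < ρ := by simpa [← NNReal.coe_lt_coe] using hz
    simpa [enorm_eq_nnnorm] using this
  have hzA : ‖z‖ₑ < rA := hzρ.trans (hρ.trans_le (min_le_left _ _))
  have hzp : ‖z‖ₑ < p.radius := hzρ.trans (hρ.trans_le (min_le_right _ _))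
  have hAz : A z = ∑' n, z ^ n • pA.coeff n := by
    simpa [FormalMultilinearSeries.apply_eq_pow_smul_coeff]
      using (hpA.hasSum (mem_eball_zero_iff.mpr hzA)).tsum_eq.symm
  have hsumA : Summable fun n => ‖z ^ n • pA.coeff n‖ := by
    simpa using pA.summable_norm_apply (mem_eball_zero_iff.mpr (hzA.trans_le hpA.r_le))
  have hsumY : Summable fun n => ‖z ^ n • p.coeff n‖ := by
    simpa using p.summable_norm_apply (mem_eball_zero_iff.mpr hzp)
  refine (p.hasDerivAt_sum hzp).congr_deriv ?_
  rw [hAz, FormalMultilinearSeries.sum]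
  simp only [FormalMultilinearSeries.apply_eq_pow_smul_coeff]
  rw [tsum_pow_smul_mul_tsum_pow_smul hsumA hsumY]
  congr! 2 with n
  rw [← Nat.cast_smul_eq_nsmul 𝕜]
  simp [p, succ_smul_odeCoeff_succ]

section Matrix

attribute [local instance] Matrix.linftyOpNormedAddCommGroup Matrix.linftyOpNormedSpace

variable {𝕜 F m n : Type*} [NontriviallyNormedField 𝕜] [NormedAddCommGroup F] [NormedSpace 𝕜 F]
  [Fintype m] [Fintype n] [DecidableEq m] [DecidableEq n]

theorem Matrix.analyticAt_of_forall_analyticAt_apply {A : F → Matrix m n 𝕜} {x : F}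
    (hA : ∀ i j, AnalyticAt 𝕜 (fun y => A y i j) x) : AnalyticAt 𝕜 A x := by
  have hsum : A = fun y => ∑ i, ∑ j, A y i j • Matrix.single i j (1 : 𝕜) := by
    funext y
    conv_lhs => rw [Matrix.matrix_eq_sum_single (A y)]
    simp [Matrix.smul_single]
  rw [hsum]
  exact Finset.analyticAt_fun_sum _ fun i _ =>
    Finset.analyticAt_fun_sum _ fun j _ => (hA i j).smul analyticAt_const

end Matrix

attribute [local instance] Matrix.linftyOpNormedRing Matrix.linftyOpNormedAlgebra

/-- Local existence of an analytic fundamental solution matrix: if the entries of the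
`n×n` matrix `A` are analytic on the disk of radius `r > 0` about `0`, then on some
smaller disk of radius `ρ > 0` there is an entrywise-analytic matrix function `Y` with
`Y(0) = 1`, `Y′(z) = A(z)·Y(z)`, and `Y(z)` invertible for all `z` in the disk. -/
theorem analytic_fundamental_matrix_exists
    (n : ℕ) (r : ℝ) (hr : 0 < r) (A : ℂ → Matrix (Fin n) (Fin n) ℂ)
    (hA : ∀ i j : Fin n, AnalyticOnNhd ℂ (fun z => A z i j) (Metric.ball (0 : ℂ) r)) :
    ∃ ρ : ℝ, 0 < ρ ∧ ρ ≤ r ∧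
      ∃ Y : ℂ → Matrix (Fin n) (Fin n) ℂ,
        (∀ i j : Fin n, AnalyticOnNhd ℂ (fun z => Y z i j) (Metric.ball (0 : ℂ) ρ)) ∧
        Y 0 = 1 ∧
        (∀ z ∈ Metric.ball (0 : ℂ) ρ, ∀ i j : Fin n,
          HasDerivAt (fun w => Y w i j) ((A z * Y z) i j) z) ∧
        (∀ z ∈ Metric.ball (0 : ℂ) ρ, IsUnit (Y z)) := by
  obtain ⟨ρ₁, hρ₁, Y, hY0, hY⟩ := (Matrix.analyticAt_of_forall_analyticAt_apply fun i j =>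
    hA i j 0 (mem_ball_self hr)).exists_hasDerivAt_eq_mul
  have hunit : {z | IsUnit (Y z)} ∈ 𝓝 0 :=
    (hY 0 (mem_ball_self hρ₁)).continuousAt.preimage_mem_nhds
      (Units.isOpen.mem_nhds (by simp [hY0]))
  obtain ⟨δ, hδ, hδY⟩ := Metric.mem_nhds_iff.mp hunit
  set ρ := min r (min ρ₁ δ)
  have hsub₁ : ball (0 : ℂ) ρ ⊆ ball 0 ρ₁ :=
    ball_subset_ball ((min_le_right _ _).trans (min_le_left _ _))
  have hsubδ : ball (0 : ℂ) ρ ⊆ ball 0 δ :=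
    ball_subset_ball ((min_le_right _ _).trans (min_le_right _ _))
  have hYan : AnalyticOnNhd ℂ Y (ball 0 ρ) := DifferentiableOn.analyticOnNhd
    (fun z hz => (hY z (hsub₁ hz)).differentiableAt.differentiableWithinAt) isOpen_ball
  refine ⟨ρ, lt_min hr (lt_min hρ₁ hδ), min_le_left _ _, Y, fun i j => ?_, hY0,
    fun z hz i j => ?_, fun z hz => hδY (hsubδ hz)⟩
  · exact (Matrix.entryLinearMap ℂ ℂ i j).toContinuousLinearMap.comp_analyticOnNhd hYan
  · exact (Matrix.entryLinearMap ℂ ℂ i j).toContinuousLinearMap.hasFDerivAt.comp_hasDerivAt z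
      (hY z (hsub₁ hz))
end

section
/- (Borel–Ritt) Let a < b be real numbers with b − a < 2π, and let (cₙ)_{n≥0} be an arbitrary sequence of complex numbers. Then there exist ρ > 0 and a function f analytic on the open sector S(a,b,ρ) such that ∑_{n≥0} cₙzⁿ is an asymptotic expansion of f on S(a,b,ρ): for every closed subsector W of S(a,b,ρ) and every N ≥ 0 there is a constant C with |f(z) − ∑_{n≤N−1} cₙzⁿ| ≤ C|z|^N for all z ∈ W. -/
/-!
Rotate so that the sector is symmetric about the direction `σ = (a + b) / 2`, and let
`h(z) = (e^{-iσ} z)^{-1/2}` (principal branch). As the opening is less than `2π`, the sector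
lies in the slit disc where `h` is analytic with `Re h > 0`, and on a closed subsector
`Re h ≥ cos(δ/2) |z|^{-1/2}` for some `δ < π`. Take `f(z) = ∑ cₙ zⁿ (1 - exp(-bₙ h(z)))` with
`bₙ = 2⁻ⁿ / (‖cₙ‖ + 1)`. Since `|1 - e^{-w}| ≤ min(|w|, 2)` when `Re w ≥ 0`, the `n`-th term is at
most `2⁻ⁿ |z|^{n-1}`: the series converges uniformly on the slit disc and its tail from `N` on is
`O(|z|^N)`. For `n < N` the error `cₙ zⁿ exp(-bₙ h(z))` is `O(|z|^N)` because
`exp(-β |z|^{-1/2}) ≤ k! |z|^{k/2} / β^k`.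
-/

/-- The open sector `S(a,b,ρ) = {r·e^{iθ} : 0 < r < ρ, a < θ < b}`. -/
def Sector (a b ρ : ℝ) : Set ℂ :=
  {z | ∃ r θ : ℝ, 0 < r ∧ r < ρ ∧ a < θ ∧ θ < b ∧ z = r * Complex.exp (θ * Complex.I)}

/-- The closed subsector `W(a',b',ρ') = {r·e^{iθ} : 0 < r ≤ ρ', a' ≤ θ ≤ b'}`. -/
def ClosedSubsector (a' b' ρ' : ℝ) : Set ℂ :=
  {z | ∃ r θ : ℝ, 0 < r ∧ r ≤ ρ' ∧ a' ≤ θ ∧ θ ≤ b' ∧ z = r * Complex.exp (θ * Complex.I)}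

/-- `∑ cₙ zⁿ` is an asymptotic expansion of `f` on the sector `S(a,b,ρ)`. -/
def IsAsymptoticExpansion (f : ℂ → ℂ) (a b ρ : ℝ) (c : ℕ → ℂ) : Prop :=
  ∀ a' b' ρ' : ℝ, a < a' → a' ≤ b' → b' < b → 0 < ρ' → ρ' < ρ →
    ∀ N : ℕ, ∃ C : ℝ, ∀ z ∈ ClosedSubsector a' b' ρ',
      ‖f z - ∑ n ∈ Finset.range N, c n * z ^ n‖ ≤ C * ‖z‖ ^ N

open Complex
open scoped Real Nat

lemma Complex.norm_exp_neg_le_one {w : ℂ} (hw : 0 ≤ w.re) : ‖exp (-w)‖ ≤ 1 := by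
  simpa [norm_exp] using hw

lemma Complex.norm_one_sub_exp_neg_le_norm {w : ℂ} (hw : 0 ≤ w.re) : ‖1 - exp (-w)‖ ≤ ‖w‖ := by
  have hderiv : ∀ ζ ∈ {ζ : ℂ | 0 ≤ ζ.re}, HasDerivAt (fun ζ => exp (-ζ)) (-exp (-ζ)) ζ :=
    fun ζ _ => by simpa using (hasDerivAt_neg ζ).cexp
  have := (convex_halfSpace_re_ge 0).norm_image_sub_le_of_norm_deriv_le
    (fun ζ hζ => (hderiv ζ hζ).differentiableAt)
    (fun ζ hζ => by rw [(hderiv ζ hζ).deriv, norm_neg]; exact norm_exp_neg_le_one hζ)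
    (show (0 : ℂ) ∈ {ζ : ℂ | 0 ≤ ζ.re} by simp) hw
  simpa [norm_sub_rev] using this

lemma Complex.norm_one_sub_exp_neg_le_two {w : ℂ} (hw : 0 ≤ w.re) : ‖1 - exp (-w)‖ ≤ 2 :=
  calc ‖1 - exp (-w)‖ ≤ ‖(1 : ℂ)‖ + ‖exp (-w)‖ := norm_sub_le _ _
    _ ≤ 1 + 1 := by rw [norm_one]; gcongr; exact norm_exp_neg_le_one hw
    _ = 2 := one_add_one_eq_two

lemma Real.exp_neg_le_factorial_div_pow {s : ℝ} (hs : 0 < s) (k : ℕ) :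
    Real.exp (-s) ≤ k ! / s ^ k := by
  rw [Real.exp_neg, inv_le_comm₀ (Real.exp_pos s) (by positivity), inv_div]
  exact Real.pow_div_factorial_le_exp _ hs.le k

lemma Real.pow_mul_exp_neg_div_sqrt_le {r β : ℝ} (hr : 0 < r) (hβ : 0 < β) {n N : ℕ}
    (hnN : n ≤ N) :
    r ^ n * Real.exp (-(β / √r)) ≤ (2 * (N - n)) ! / β ^ (2 * (N - n)) * r ^ N := by
  have hpow : (β / √r) ^ (2 * (N - n)) = β ^ (2 * (N - n)) / r ^ (N - n) := by
    rw [div_pow, pow_mul (√r), Real.sq_sqrt hr.le]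
  calc r ^ n * Real.exp (-(β / √r))
      ≤ r ^ n * ((2 * (N - n)) ! / (β / √r) ^ (2 * (N - n))) := by
        gcongr; exact Real.exp_neg_le_factorial_div_pow (by positivity) _
    _ = (2 * (N - n)) ! / β ^ (2 * (N - n)) * (r ^ n * r ^ (N - n)) := by
        rw [hpow]; field_simp
    _ = (2 * (N - n)) ! / β ^ (2 * (N - n)) * r ^ N := by
        rw [← pow_add, Nat.add_sub_cancel' hnN]

namespace BorelRitt

noncomputable def invSqrt (σ : ℝ) (z : ℂ) : ℂ := exp (-(1 / 2) * log (exp (-σ * I) * z))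

def slitDisc (σ : ℝ) : Set ℂ := {z | exp (-σ * I) * z ∈ slitPlane} ∩ Metric.ball 0 1

noncomputable def scale (c : ℕ → ℂ) (n : ℕ) : ℝ := (1 / 2) ^ n / (‖c n‖ + 1)

noncomputable def term (c : ℕ → ℂ) (σ : ℝ) (n : ℕ) (z : ℂ) : ℂ :=
  c n * z ^ n * (1 - exp (-(scale c n * invSqrt σ z)))

noncomputable def series (c : ℕ → ℂ) (σ : ℝ) (z : ℂ) : ℂ := ∑' n, term c σ n z

variable {c : ℕ → ℂ} {σ : ℝ}

lemma isOpen_slitDisc : IsOpen (slitDisc σ) :=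
  (isOpen_slitPlane.preimage (by fun_prop)).inter Metric.isOpen_ball

lemma norm_lt_one_of_mem_slitDisc {z : ℂ} (hz : z ∈ slitDisc σ) : ‖z‖ < 1 :=
  mem_ball_zero_iff.mp hz.2

lemma ne_zero_of_mem_slitDisc {z : ℂ} (hz : z ∈ slitDisc σ) : z ≠ 0 := by
  rintro rfl
  exact slitPlane_ne_zero (mul_zero (exp (-σ * I)) ▸ hz.1) rfl

lemma norm_invSqrt {z : ℂ} (hz : z ≠ 0) : ‖invSqrt σ z‖ = (√‖z‖)⁻¹ := by
  rw [invSqrt, norm_exp, Real.sqrt_eq_rpow, ← Real.rpow_neg (norm_nonneg z),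
    Real.rpow_def_of_pos (norm_pos_iff.mpr hz)]
  simp [log_re, norm_exp]
  ring

lemma re_invSqrt_pos {z : ℂ} (hz : exp (-σ * I) * z ∈ slitPlane) : 0 < (invSqrt σ z).re := by
  have hlt := (arg_le_pi _).lt_of_ne (slitPlane_arg_ne_pi hz)
  have hgt := neg_pi_lt_arg (exp (-σ * I) * z)
  rw [invSqrt]
  generalize exp (-σ * I) * z = w at hlt hgt
  rw [exp_re]
  refine mul_pos (Real.exp_pos _) (Real.cos_pos_of_mem_Ioo ⟨?_, ?_⟩) <;>
  · simp [log_im]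
    linarith

lemma differentiableOn_invSqrt : DifferentiableOn ℂ (invSqrt σ) (slitDisc σ) := fun z hz =>
  (((differentiableAt_log hz.1).comp z (by fun_prop)).const_mul _).cexp.differentiableWithinAt

lemma exp_neg_mul_I_mul_polar {r : ℝ} (hr : 0 < r) (θ : ℝ) :
    exp (-σ * I) * (r * exp (θ * I)) = exp (Real.log r + (θ - σ : ℝ) * I) := by
  rw [exp_add, ← ofReal_exp, Real.exp_log hr, mul_left_comm, ← exp_add]
  push_cast
  ring_nf

lemma polar_mem_slitDisc {r θ : ℝ} (hr : 0 < r) (hr1 : r < 1) (hθ : |θ - σ| < π) :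
    (r * exp (θ * I) : ℂ) ∈ slitDisc σ := by
  obtain ⟨hθ₁, hθ₂⟩ := abs_lt.mp hθ
  refine ⟨?_, ?_⟩
  · rw [Set.mem_ofPred_eq, exp_neg_mul_I_mul_polar hr, exp_mem_slitPlane]
    simp only [add_im, ofReal_im, mul_im, ofReal_re, I_im, I_re, mul_zero, mul_one, zero_add,
      add_zero]
    rw [toIocMod_eq_self _ |>.mpr ⟨hθ₁, by linarith⟩]
    exact hθ₂.ne
  · rwa [mem_ball_zero_iff, norm_mul, norm_exp_ofReal_mul_I, mul_one, norm_real,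
      Real.norm_of_nonneg hr.le]

lemma re_invSqrt_polar {r θ : ℝ} (hr : 0 < r) (hθ : |θ - σ| < π) :
    (invSqrt σ (r * exp (θ * I))).re = Real.cos ((θ - σ) / 2) / √r := by
  obtain ⟨hθ₁, hθ₂⟩ := abs_lt.mp hθ
  rw [invSqrt, exp_neg_mul_I_mul_polar hr, log_exp (by simpa using hθ₁) (by simpa using hθ₂.le),
    exp_re]
  have hre : (-(1 / 2) * (Real.log r + (θ - σ : ℝ) * I) : ℂ).re = -(Real.log r * (1 / 2)) := by
    simp; ring
  have him : (-(1 / 2) * (Real.log r + (θ - σ : ℝ) * I) : ℂ).im = -((θ - σ) / 2) := by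
    simp; ring
  rw [hre, him, Real.cos_neg, Real.exp_neg, ← Real.rpow_def_of_pos hr, ← Real.sqrt_eq_rpow,
    inv_mul_eq_div]

lemma sector_subset_slitDisc {a b : ℝ} (ha : σ - π ≤ a) (hb : b ≤ σ + π) :
    Sector a b 1 ⊆ slitDisc σ := by
  rintro _ ⟨r, θ, hr, hr1, hθa, hθb, rfl⟩
  exact polar_mem_slitDisc hr hr1 (abs_lt.mpr ⟨by linarith, by linarith⟩)

lemma closedSubsector_subset_sector {a b a' b' ρ' ρ : ℝ} (ha : a < a') (hb : b' < b)
    (hρ : ρ' < ρ) : ClosedSubsector a' b' ρ' ⊆ Sector a b ρ := by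
  rintro _ ⟨r, θ, hr, hrρ, hθa, hθb, rfl⟩
  exact ⟨r, θ, hr, by linarith, by linarith, by linarith, rfl⟩

lemma cos_div_sqrt_le_re_invSqrt {a' b' ρ' δ : ℝ} (hδ : δ < π) (ha : σ - δ ≤ a')
    (hb : b' ≤ σ + δ) {z : ℂ} (hz : z ∈ ClosedSubsector a' b' ρ') :
    Real.cos (δ / 2) / √‖z‖ ≤ (invSqrt σ z).re := by
  obtain ⟨r, θ, hr, -, hθa, hθb, rfl⟩ := hz
  have hθ : |θ - σ| ≤ δ := abs_le.mpr ⟨by linarith, by linarith⟩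
  rw [re_invSqrt_polar hr (hθ.trans_lt hδ), norm_mul, norm_exp_ofReal_mul_I, mul_one, norm_real,
    Real.norm_of_nonneg hr.le, ← Real.cos_abs ((θ - σ) / 2)]
  gcongr
  refine Real.cos_le_cos_of_nonneg_of_le_pi (abs_nonneg _) (by linarith [Real.pi_pos]) ?_
  rw [abs_div, abs_two]
  linarith

lemma scale_pos (n : ℕ) : 0 < scale c n := by unfold scale; positivity

lemma norm_mul_scale_le (n : ℕ) : ‖c n‖ * scale c n ≤ (1 / 2) ^ n := by
  rw [scale, mul_div_assoc', div_le_iff₀ (by positivity), mul_comm]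
  gcongr
  linarith

lemma re_scale_mul_invSqrt_nonneg {z : ℂ} (hz : z ∈ slitDisc σ) (n : ℕ) :
    0 ≤ (scale c n * invSqrt σ z).re := by
  rw [re_ofReal_mul]
  exact mul_nonneg (scale_pos n).le (re_invSqrt_pos hz.1).le

lemma norm_term (n : ℕ) (z : ℂ) :
    ‖term c σ n z‖ = ‖c n‖ * ‖z‖ ^ n * ‖1 - exp (-(scale c n * invSqrt σ z))‖ := by
  rw [term, norm_mul, norm_mul, norm_pow]

lemma norm_term_le_two_mul {z : ℂ} (hz : z ∈ slitDisc σ) (n : ℕ) :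
    ‖term c σ n z‖ ≤ 2 * ‖c n‖ * ‖z‖ ^ n :=
  calc ‖term c σ n z‖ ≤ ‖c n‖ * ‖z‖ ^ n * 2 := by
        rw [norm_term]
        gcongr
        exact norm_one_sub_exp_neg_le_two (re_scale_mul_invSqrt_nonneg hz n)
    _ = 2 * ‖c n‖ * ‖z‖ ^ n := by ring

lemma norm_term_le_half_pow {z : ℂ} (hz : z ∈ slitDisc σ) {n : ℕ} (hn : n ≠ 0) :
    ‖term c σ n z‖ ≤ (1 / 2) ^ n * ‖z‖ ^ (n - 1) := by
  have hz0 : 0 < ‖z‖ := norm_pos_iff.mpr (ne_zero_of_mem_slitDisc hz)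
  have hpow : ‖z‖ ^ n * (√‖z‖)⁻¹ ≤ ‖z‖ ^ (n - 1) := by
    rw [← Nat.sub_add_cancel (Nat.one_le_iff_ne_zero.mpr hn), pow_succ, Nat.add_sub_cancel,
      mul_assoc]
    refine mul_le_of_le_one_right (by positivity) ?_
    rw [mul_inv_le_iff₀ (by positivity), one_mul]
    exact Real.le_sqrt_self_iff.mpr (norm_lt_one_of_mem_slitDisc hz).le
  calc ‖term c σ n z‖ ≤ ‖c n‖ * ‖z‖ ^ n * ‖(scale c n : ℂ) * invSqrt σ z‖ := by
        rw [norm_term]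
        gcongr
        exact norm_one_sub_exp_neg_le_norm (re_scale_mul_invSqrt_nonneg hz n)
    _ = (‖c n‖ * scale c n) * (‖z‖ ^ n * (√‖z‖)⁻¹) := by
        rw [norm_mul, norm_invSqrt (ne_zero_of_mem_slitDisc hz), norm_real,
          Real.norm_of_nonneg (scale_pos n).le]
        ring
    _ ≤ (1 / 2) ^ n * ‖z‖ ^ (n - 1) := by
        gcongr
        exact norm_mul_scale_le n

lemma norm_term_le_geometric {z : ℂ} (hz : z ∈ slitDisc σ) (n : ℕ) :
    ‖term c σ n z‖ ≤ (2 * ‖c 0‖ + 1) * (1 / 2) ^ n := by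
  rcases eq_or_ne n 0 with rfl | hn
  · simpa using (norm_term_le_two_mul hz 0).trans (by linarith)
  · calc ‖term c σ n z‖ ≤ (1 / 2) ^ n * ‖z‖ ^ (n - 1) := norm_term_le_half_pow hz hn
      _ ≤ (1 / 2) ^ n := mul_le_of_le_one_right (by positivity)
          (pow_le_one₀ (norm_nonneg z) (norm_lt_one_of_mem_slitDisc hz).le)
      _ ≤ (2 * ‖c 0‖ + 1) * (1 / 2) ^ n :=
          le_mul_of_one_le_left (by positivity) (by linarith [norm_nonneg (c 0)])

lemma summable_geometric_bound : Summable fun n : ℕ ↦ (2 * ‖c 0‖ + 1) * (1 / 2 : ℝ) ^ n :=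
  (summable_geometric_two).mul_left _

lemma summable_term {z : ℂ} (hz : z ∈ slitDisc σ) : Summable fun n ↦ term c σ n z :=
  Summable.of_norm_bounded summable_geometric_bound (norm_term_le_geometric hz)

lemma analyticOnNhd_series : AnalyticOnNhd ℂ (series c σ) (slitDisc σ) := by
  refine (differentiableOn_tsum_of_summable_norm summable_geometric_bound (fun n ↦ ?_)
    isOpen_slitDisc fun n z hz ↦ norm_term_le_geometric hz n).analyticOnNhd isOpen_slitDisc
  unfold term
  have := differentiableOn_invSqrt (σ := σ)
  fun_prop

lemma norm_tsum_term_tail_le {z : ℂ} (hz : z ∈ slitDisc σ) (N : ℕ) :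
    ‖∑' n, term c σ (n + N) z‖ ≤ (2 * ‖c N‖ + 1) * ‖z‖ ^ N := by
  have hz1 := (norm_lt_one_of_mem_slitDisc hz).le
  have hlater : ‖∑' n, term c σ (n + 1 + N) z‖ ≤ ‖z‖ ^ N := by
    refine tsum_of_norm_bounded (hasSum_geometric_two' (‖z‖ ^ N)) fun n ↦ ?_
    calc ‖term c σ (n + 1 + N) z‖ ≤ (1 / 2) ^ (n + 1 + N) * ‖z‖ ^ (n + 1 + N - 1) :=
          norm_term_le_half_pow hz (by omega)
      _ ≤ (1 / 2) ^ (n + 1) * ‖z‖ ^ N := by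
          rw [show n + 1 + N - 1 = n + N by omega, pow_add _ n N]
          exact mul_le_mul (pow_le_pow_of_le_one (by norm_num) (by norm_num) (by omega))
            (mul_le_of_le_one_left (by positivity) (pow_le_one₀ (norm_nonneg z) hz1))
            (by positivity) (by positivity)
      _ = ‖z‖ ^ N / 2 / 2 ^ n := by rw [one_div_pow, pow_succ]; field_simp
  rw [((summable_nat_add_iff N).mpr (summable_term hz)).tsum_eq_zero_add, zero_add]
  calc ‖term c σ N z + ∑' n, term c σ (n + 1 + N) z‖
      ≤ 2 * ‖c N‖ * ‖z‖ ^ N + ‖z‖ ^ N :=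
        norm_add_le_of_le (norm_term_le_two_mul hz N) hlater
    _ = (2 * ‖c N‖ + 1) * ‖z‖ ^ N := by ring

lemma norm_term_sub_le {z : ℂ} (hz : z ≠ 0) {ε : ℝ} (hε : 0 < ε)
    (hre : ε / √‖z‖ ≤ (invSqrt σ z).re) {n N : ℕ} (hnN : n ≤ N) :
    ‖term c σ n z - c n * z ^ n‖ ≤
      ‖c n‖ * ((2 * (N - n))! / (scale c n * ε) ^ (2 * (N - n))) * ‖z‖ ^ N := by
  have hscale := scale_pos (c := c) n
  calc ‖term c σ n z - c n * z ^ n‖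
      = ‖c n‖ * (‖z‖ ^ n * Real.exp (-(scale c n * (invSqrt σ z).re))) := by
        rw [term, mul_one_sub, sub_sub_cancel_left, norm_neg, norm_mul, norm_mul, norm_pow,
          norm_exp, neg_re, re_ofReal_mul, mul_assoc]
    _ ≤ ‖c n‖ * (‖z‖ ^ n * Real.exp (-(scale c n * ε / √‖z‖))) := by
        rw [mul_div_assoc]
        gcongr
    _ ≤ ‖c n‖ * ((2 * (N - n))! / (scale c n * ε) ^ (2 * (N - n)) * ‖z‖ ^ N) :=
        mul_le_mul_of_nonneg_left
          (Real.pow_mul_exp_neg_div_sqrt_le (norm_pos_iff.mpr hz) (by positivity) hnN)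
          (norm_nonneg _)
    _ = ‖c n‖ * ((2 * (N - n))! / (scale c n * ε) ^ (2 * (N - n))) * ‖z‖ ^ N := by ring

theorem isAsymptoticExpansion_series {a b : ℝ} (ha : σ - π ≤ a)
    (hb : b ≤ σ + π) : IsAsymptoticExpansion (series c σ) a b 1 c := by
  intro a' b' ρ' ha' hab' hb' _ hρ' N
  set δ := max (σ - a') (b' - σ)
  have hδa : σ - a' ≤ δ := le_max_left _ _
  have hδb : b' - σ ≤ δ := le_max_right _ _
  have hδ : δ < π := max_lt (by linarith) (by linarith)
  have hε : 0 < Real.cos (δ / 2) :=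
    Real.cos_pos_of_mem_Ioo ⟨by linarith [Real.pi_pos], by linarith⟩
  set K := fun n ↦ ‖c n‖ * ((2 * (N - n))! / (scale c n * Real.cos (δ / 2)) ^ (2 * (N - n)))
  refine ⟨∑ n ∈ Finset.range N, K n + (2 * ‖c N‖ + 1), fun z hz ↦ ?_⟩
  have hzD : z ∈ slitDisc σ :=
    sector_subset_slitDisc ha hb (closedSubsector_subset_sector ha' hb' hρ' hz)
  have hre := cos_div_sqrt_le_re_invSqrt (σ := σ) hδ (by linarith) (by linarith) hz
  rw [series, ← (summable_term hzD).sum_add_tsum_nat_add N]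
  calc ‖∑ n ∈ Finset.range N, term c σ n z + ∑' n, term c σ (n + N) z
        - ∑ n ∈ Finset.range N, c n * z ^ n‖
      = ‖∑ n ∈ Finset.range N, (term c σ n z - c n * z ^ n) + ∑' n, term c σ (n + N) z‖ := by
        rw [Finset.sum_sub_distrib, add_sub_right_comm]
    _ ≤ ∑ n ∈ Finset.range N, ‖term c σ n z - c n * z ^ n‖ + ‖∑' n, term c σ (n + N) z‖ :=
        norm_add_le_of_le (norm_sum_le _ _) le_rfl
    _ ≤ ∑ n ∈ Finset.range N, K n * ‖z‖ ^ N + (2 * ‖c N‖ + 1) * ‖z‖ ^ N := by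
        gcongr with n hn
        · exact norm_term_sub_le (ne_zero_of_mem_slitDisc hzD) hε hre
            (Finset.mem_range.mp hn).le
        · exact norm_tsum_term_tail_le hzD N
    _ = (∑ n ∈ Finset.range N, K n + (2 * ‖c N‖ + 1)) * ‖z‖ ^ N := by
        rw [← Finset.sum_mul]
        ring

end BorelRitt

theorem borel_ritt_general
    (a b : ℝ) (hopening : b - a < 2 * Real.pi) (c : ℕ → ℂ) :
    ∃ ρ : ℝ, 0 < ρ ∧ ∃ f : ℂ → ℂ,
      AnalyticOnNhd ℂ f (Sector a b ρ) ∧ IsAsymptoticExpansion f a b ρ c := by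
  have ha : (a + b) / 2 - π ≤ a := by linarith
  have hb : b ≤ (a + b) / 2 + π := by linarith
  exact ⟨1, one_pos, BorelRitt.series c ((a + b) / 2),
    BorelRitt.analyticOnNhd_series.mono (BorelRitt.sector_subset_slitDisc ha hb),
    BorelRitt.isAsymptoticExpansion_series ha hb⟩

/-- Borel–Ritt: on a sector of opening less than `2π`, every formal power series is
the asymptotic expansion of some analytic function. -/
theorem borel_ritt
    (a b : ℝ) (hab : a < b) (hopening : b - a < 2 * Real.pi) (c : ℕ → ℂ) :
    ∃ ρ : ℝ, 0 < ρ ∧ ∃ f : ℂ → ℂ,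
      AnalyticOnNhd ℂ f (Sector a b ρ) ∧ IsAsymptoticExpansion f a b ρ c :=
  borel_ritt_general a b hopening c
end

section
/- (Watson's Lemma, uniqueness) Let k > 0 be a real number, let a < b be real numbers with b − a > π/k, and let f be analytic on the open sector S(a,b,ρ) for some ρ > 0. Suppose that for every closed subsector W of S(a,b,ρ) there exist constants A, B > 0 such that |f(z)| ≤ A·exp(−B·|z|^{−k}) for all z ∈ W. Then f is identically zero on S(a,b,ρ). (Equivalently, on sectors of opening greater than π/k, a Gevrey function of order k is determined by its asymptotic expansion.) -/
open Complex Filter Set Topology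
open scoped Real

lemma sector_eq_image (a b ρ : ℝ) :
    Sector a b ρ = (fun p : ℝ × ℝ => (p.1 : ℂ) * exp (p.2 * I)) '' Ioo 0 ρ ×ˢ Ioo a b := by
  ext z
  simp [Sector, eq_comm, and_assoc]

lemma isPreconnected_sector (a b ρ : ℝ) : IsPreconnected (Sector a b ρ) := by
  rw [sector_eq_image]
  exact ((convex_Ioo 0 ρ).prod (convex_Ioo a b)).isPreconnected.image _ (by fun_prop)

lemma closedSubsector_subset_sector {a b ρ a' b' ρ' : ℝ} (ha : a < a') (hb : b' < b)
    (hρ : ρ' < ρ) : ClosedSubsector a' b' ρ' ⊆ Sector a b ρ := by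
  rintro z ⟨r, θ, hr, hrρ, haθ, hθb, rfl⟩
  exact ⟨r, θ, hr, hrρ.trans_lt hρ, ha.trans_le haθ, hθb.trans_lt hb, rfl⟩

lemma tendsto_ofReal_mul_nhdsNE {u : ℂ} (hu : u ≠ 0) (r : ℝ) :
    Tendsto (fun t : ℝ => (t : ℂ) * u) (𝓝[≠] r) (𝓝[≠] (r * u)) := by
  refine ContinuousWithinAt.tendsto_nhdsWithin (by fun_prop) fun t ht h => ht ?_
  exact_mod_cast mul_right_cancel₀ hu h

lemma AnalyticOnNhd.eqOn_zero_sector_of_eventually_zero_ray {f : ℂ → ℂ} {a b ρ θ r₀ : ℝ}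
    (hf : AnalyticOnNhd ℂ f (Sector a b ρ)) (hθ : θ ∈ Ioo a b) (hr₀ : r₀ ∈ Ioo 0 ρ)
    (h : ∀ᶠ r : ℝ in 𝓝 r₀, f (r * exp (θ * I)) = 0) : EqOn f 0 (Sector a b ρ) :=
  hf.eqOn_zero_of_preconnected_of_frequently_eq_zero (isPreconnected_sector a b ρ)
    ⟨r₀, θ, hr₀.1, hr₀.2, hθ.1, hθ.2, rfl⟩
    ((tendsto_ofReal_mul_nhdsNE (exp_ne_zero _) r₀).frequently
      (h.filter_mono nhdsWithin_le_nhds).frequently)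

lemma cpow_ofReal_eq_polar {u : ℂ} (hu : u ≠ 0) (t : ℝ) :
    u ^ (t : ℂ) = ((‖u‖ ^ t : ℝ) : ℂ) * exp ((t * arg u : ℝ) * I) := by
  rw [cpow_def_of_ne_zero hu, Real.rpow_def_of_pos (norm_pos_iff.mpr hu), ofReal_exp,
    ← exp_add, log]
  push_cast
  ring_nf

noncomputable def halfPlaneToSector (R μ c : ℝ) (w : ℂ) : ℂ :=
  R * (w + 1) ^ ((-μ : ℝ) : ℂ) * exp (c * I)

section halfPlaneToSector

variable {R μ c : ℝ} {w : ℂ}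

lemma halfPlaneToSector_eq_polar (hw : w + 1 ≠ 0) :
    halfPlaneToSector R μ c w =
      ((R * ‖w + 1‖ ^ (-μ) : ℝ) : ℂ) * exp ((c - μ * arg (w + 1) : ℝ) * I) := by
  rw [halfPlaneToSector, cpow_ofReal_eq_polar hw, mul_assoc, mul_assoc, ← exp_add]
  push_cast
  ring_nf

lemma norm_halfPlaneToSector (hR : 0 ≤ R) :
    ‖halfPlaneToSector R μ c w‖ = R * ‖w + 1‖ ^ (-μ) := by
  rw [halfPlaneToSector, norm_mul, norm_mul, norm_cpow_real, norm_exp_ofReal_mul_I, mul_one,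
    norm_real, Real.norm_of_nonneg hR]

lemma halfPlaneToSector_mem_closedSubsector (hR : 0 < R) (hμ : 0 ≤ μ) (hw : 0 ≤ w.re) :
    halfPlaneToSector R μ c w ∈ ClosedSubsector (c - μ * π / 2) (c + μ * π / 2) R := by
  have hre : 1 ≤ (w + 1).re := by rw [add_re, one_re]; linarith
  have hw1 : 1 ≤ ‖w + 1‖ := hre.trans (re_le_norm _)
  have harg : |arg (w + 1)| < π / 2 :=
    abs_arg_lt_pi_div_two_iff.mpr (Or.inl (one_pos.trans_le hre))
  have hμarg : |μ * arg (w + 1)| ≤ μ * π / 2 := by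
    rw [abs_mul, abs_of_nonneg hμ, mul_div_assoc]
    exact mul_le_mul_of_nonneg_left harg.le hμ
  refine ⟨_, _, by positivity, ?_, ?_, ?_,
    halfPlaneToSector_eq_polar (norm_pos_iff.mp (one_pos.trans_le hw1))⟩
  · exact mul_le_of_le_one_right hR.le (Real.rpow_le_one_of_one_le_of_nonpos hw1 (by linarith))
  · linarith [le_abs_self (μ * arg (w + 1))]
  · linarith [neg_abs_le (μ * arg (w + 1))]

lemma differentiableAt_halfPlaneToSector (hw : w + 1 ∈ slitPlane) :
    DifferentiableAt ℂ (halfPlaneToSector R μ c) w :=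
  (((differentiableAt_id.add_const 1).cpow (differentiableAt_const _) hw).const_mul
    _).mul_const _

lemma exists_halfPlaneToSector_eq (hμ : 0 < μ) {r : ℝ} (hr : r ∈ Ioc 0 R) :
    ∃ x : ℝ, 0 ≤ x ∧ halfPlaneToSector R μ c x = r * exp (c * I) := by
  have hRr : 1 ≤ R / r := (one_le_div hr.1).mpr hr.2
  refine ⟨(R / r) ^ μ⁻¹ - 1, sub_nonneg.mpr (Real.one_le_rpow hRr (by positivity)), ?_⟩
  have hpow : ((R / r) ^ μ⁻¹) ^ (-μ) = r / R := by
    rw [← Real.rpow_mul (by positivity), inv_mul_eq_div, neg_div, div_self hμ.ne',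
      Real.rpow_neg_one, inv_div]
  rw [halfPlaneToSector, ofReal_sub, ofReal_one, sub_add_cancel,
    ← ofReal_cpow (by positivity), hpow]
  push_cast
  field_simp [ofReal_ne_zero.mpr (hr.1.trans_le hr.2).ne']

end halfPlaneToSector

lemma tendsto_mul_sub_mul_rpow_atBot (c : ℝ) {B s : ℝ} (hB : 0 < B) (hs : 1 < s) :
    Tendsto (fun x : ℝ => c * x - B * x ^ s) atTop atBot := by
  have hfactor : (fun x : ℝ => x * (c - B * x ^ (s - 1))) =ᶠ[atTop]
      fun x => c * x - B * x ^ s := by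
    filter_upwards [eventually_gt_atTop 0] with x hx
    rw [Real.rpow_sub_one hx.ne']
    field_simp
  refine Tendsto.congr' hfactor (tendsto_id.atTop_mul_atBot₀ ?_)
  exact tendsto_atBot_add_const_left _ c
    (tendsto_neg_atTop_atBot.comp ((tendsto_rpow_atTop (by linarith)).const_mul_atTop hB))

lemma superpolynomialDecay_exp_neg_mul_rpow {B s : ℝ} (hB : 0 < B) (hs : 1 < s) :
    Asymptotics.SuperpolynomialDecay atTop Real.exp fun x => Real.exp (-B * x ^ s) := by
  intro n
  simp_rw [← Real.exp_nat_mul, ← Real.exp_add, neg_mul, ← sub_eq_add_neg]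
  exact Real.tendsto_exp_atBot.comp (tendsto_mul_sub_mul_rpow_atBot n hB hs)

lemma eqOn_zero_of_bounded_of_exp_neg_rpow_decay {E : Type*} [NormedAddCommGroup E]
    [NormedSpace ℂ E] {g : ℂ → E} {C A B s : ℝ} (hd : DiffContOnCl ℂ g {z | 0 < z.re})
    (hbdd : ∀ z : ℂ, 0 ≤ z.re → ‖g z‖ ≤ C) (hB : 0 < B) (hs : 1 < s)
    (hdecay : ∀ x : ℝ, 0 ≤ x → ‖g x‖ ≤ A * Real.exp (-B * x ^ s)) :
    EqOn g 0 {z | 0 ≤ z.re} := by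
  refine PhragmenLindelof.eq_zero_on_right_half_plane_of_superexponential_decay hd
    ⟨0, two_pos, 0, ?_⟩ ?_ ⟨C, fun x => hbdd _ (by simp)⟩
  · refine Asymptotics.IsBigO.of_bound C (eventually_inf_principal.mpr (.of_forall ?_))
    intro z hz
    simpa using hbdd z (le_of_lt hz)
  · refine ((superpolynomialDecay_exp_neg_mul_rpow hB hs).const_mul A).trans_eventually_abs_le ?_
    filter_upwards [eventually_ge_atTop 0] with x hx
    simp only [Function.comp, abs_norm]
    exact (hdecay x hx).trans (le_abs_self _)

lemma eqOn_zero_comp_halfPlaneToSector {E : Type*} [NormedAddCommGroup E] [NormedSpace ℂ E]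
    {f : ℂ → E} {k R μ c A B : ℝ} (hR : 0 < R) (hμ : 0 < μ) (hμk : 1 < μ * k) (hA : 0 ≤ A)
    (hB : 0 < B)
    (hf : ∀ z ∈ ClosedSubsector (c - μ * π / 2) (c + μ * π / 2) R, DifferentiableAt ℂ f z)
    (hdecay : ∀ z ∈ ClosedSubsector (c - μ * π / 2) (c + μ * π / 2) R,
      ‖f z‖ ≤ A * Real.exp (-B * ‖z‖ ^ (-k))) :
    EqOn (f ∘ halfPlaneToSector R μ c) 0 {w | 0 ≤ w.re} := by
  have hmaps : ∀ w : ℂ, 0 ≤ w.re →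
      halfPlaneToSector R μ c w ∈ ClosedSubsector (c - μ * π / 2) (c + μ * π / 2) R := fun w =>
    halfPlaneToSector_mem_closedSubsector (c := c) hR hμ.le
  refine eqOn_zero_of_bounded_of_exp_neg_rpow_decay (C := A) (A := A) (B := B * R ^ (-k))
    ?_ (fun w hw => ?_) (by positivity) hμk (fun x hx => ?_)
  · refine DifferentiableOn.diffContOnCl fun w hw => ?_
    rw [closure_setOfPred_lt_re] at hw
    have hw1 : w + 1 ∈ slitPlane := Or.inl (by rw [add_re, one_re]; linarith [hw.out])
    exact ((hf _ (hmaps w hw)).comp w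
      (differentiableAt_halfPlaneToSector hw1)).differentiableWithinAt
  · refine (hdecay _ (hmaps w hw)).trans (mul_le_of_le_one_right hA ?_)
    have := Real.rpow_nonneg (norm_nonneg (halfPlaneToSector R μ c w)) (-k)
    exact Real.exp_le_one_iff.mpr (by nlinarith)
  · have hnorm : ‖halfPlaneToSector R μ c x‖ ^ (-k) = R ^ (-k) * (x + 1) ^ (μ * k) := by
      rw [norm_halfPlaneToSector hR.le, ← ofReal_one, ← ofReal_add, norm_real,
        Real.norm_of_nonneg (by linarith), Real.mul_rpow hR.le (by positivity),
        ← Real.rpow_mul (by linarith), neg_mul_neg]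
    refine (hdecay _ (hmaps x (by simpa using hx))).trans ?_
    rw [hnorm, neg_mul, neg_mul, mul_assoc]
    gcongr
    linarith

theorem watson_lemma_uniqueness_general
    (k : ℝ) (hk : 0 < k) (a b ρ : ℝ) (hρ : 0 < ρ)
    (hopening : b - a > Real.pi / k)
    (f : ℂ → ℂ) (hf : AnalyticOnNhd ℂ f (Sector a b ρ))
    (hdecay : ∀ a' b' ρ' : ℝ, a < a' → a' ≤ b' → b' < b → 0 < ρ' → ρ' < ρ →
      ∃ A B : ℝ, 0 < A ∧ 0 < B ∧ ∀ z ∈ ClosedSubsector a' b' ρ',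
        ‖f z‖ ≤ A * Real.exp (-B * ‖z‖ ^ (-k : ℝ))) :
    ∀ z ∈ Sector a b ρ, f z = 0 := by
  have hμ_bounds : 1 / k < (b - a) / π := by
    rw [lt_div_iff₀ Real.pi_pos, one_div_mul_eq_div]
    exact hopening
  obtain ⟨μ, hkμ, hμ_lt⟩ := exists_between hμ_bounds
  have hμ : 0 < μ := (one_div_pos.mpr hk).trans hkμ
  have hμk : 1 < μ * k := (div_lt_iff₀ hk).mp hkμ
  have hμπ : μ * π < b - a := (lt_div_iff₀ Real.pi_pos).mp hμ_lt
  have hμπ_pos : 0 < μ * π := mul_pos hμ Real.pi_pos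
  set c := (a + b) / 2 with hc
  obtain ⟨A, B, hA, hB, hbound⟩ := hdecay (c - μ * π / 2) (c + μ * π / 2) (ρ / 2)
    (by linarith) (by linarith) (by linarith) (by linarith) (by linarith)
  have hW : ClosedSubsector (c - μ * π / 2) (c + μ * π / 2) (ρ / 2) ⊆ Sector a b ρ :=
    closedSubsector_subset_sector (by linarith) (by linarith) (by linarith)
  have hzero := eqOn_zero_comp_halfPlaneToSector (half_pos hρ) hμ hμk hA.le hB
    (fun z hz => (hf z (hW hz)).differentiableAt) hbound
  have hray : ∀ᶠ r : ℝ in 𝓝 (ρ / 4), f (r * exp (c * I)) = 0 := by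
    filter_upwards [Ioo_mem_nhds (by linarith : 0 < ρ / 4) (by linarith : ρ / 4 < ρ / 2)]
      with r hr
    obtain ⟨x, hx, hx_eq⟩ := exists_halfPlaneToSector_eq (R := ρ / 2) (c := c) hμ ⟨hr.1, hr.2.le⟩
    rw [← hx_eq]
    exact hzero (show 0 ≤ (x : ℂ).re by simpa using hx)
  exact hf.eqOn_zero_sector_of_eventually_zero_ray ⟨by linarith, by linarith⟩
    ⟨by linarith, by linarith⟩ hray

/-- Watson's Lemma (uniqueness): a function analytic on a sector of opening greater
than `π/k` that decays like `exp(−B|z|^{−k})` on every closed subsector is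
identically zero. -/
theorem watson_lemma_uniqueness
    (k : ℝ) (hk : 0 < k) (a b ρ : ℝ) (hab : a < b) (hρ : 0 < ρ)
    (hopening : b - a > Real.pi / k)
    (f : ℂ → ℂ) (hf : AnalyticOnNhd ℂ f (Sector a b ρ))
    (hdecay : ∀ a' b' ρ' : ℝ, a < a' → a' ≤ b' → b' < b → 0 < ρ' → ρ' < ρ →
      ∃ A B : ℝ, 0 < A ∧ 0 < B ∧ ∀ z ∈ ClosedSubsector a' b' ρ',
        ‖f z‖ ≤ A * Real.exp (-B * ‖z‖ ^ (-k : ℝ))) :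
    ∀ z ∈ Sector a b ρ, f z = 0 :=
  watson_lemma_uniqueness_general k hk a b ρ hρ hopening f hf hdecay
end

section
/- Let k > 0 be real and let f be analytic on the open sector S(a,b,ρ). Then the following are equivalent: (1) f is Gevrey of order k with asymptotic expansion 0, i.e. for every closed subsector W of S(a,b,ρ) there exist A > 0 and c > 0 such that for all N ≥ 1 and all z ∈ W with |z| ≤ c one has |f(z)| ≤ A^N·(N!)^{1/k}·|z|^N; (2) for every closed subsector W of S(a,b,ρ) there exist A, B > 0 such that |f(z)| ≤ A·exp(−B·|z|^{−k}) for all z ∈ W. -/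
/-!
Exponential decay gives the Gevrey bounds through `e^{-u} ≤ N! / u^N` (one term of the
exponential series), applied with `u = kB|z|^{-k}` and raised to the power `1/k`.

Conversely, `N! ≤ N^N` shows that the Gevrey bound with index `N = ⌊(2A|z|)^{-k}⌋₊` is at
most `2^{-N}`, which is of size `exp(-log 2 · (2A|z|)^{-k})`. Away from the vertex, `f` is
bounded on the closed subsector, so enlarging the constant gives exponential decay there too.
-/

open Real
open scoped Nat

/-- Gevrey bounds of order `k` for the asymptotic expansion `0`. -/
def IsGevreyFlatOn (k : ℝ) (f : ℂ → ℂ) (W : Set ℂ) : Prop :=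
  ∃ A c₀ : ℝ, 0 < A ∧ 0 < c₀ ∧
    ∀ N : ℕ, 1 ≤ N → ∀ z ∈ W, ‖z‖ ≤ c₀ →
      ‖f z‖ ≤ A ^ N * (N.factorial : ℝ) ^ ((1 : ℝ) / k) * ‖z‖ ^ N

def HasExpDecayOn (k : ℝ) (f : ℂ → ℂ) (W : Set ℂ) : Prop :=
  ∃ A B : ℝ, 0 < A ∧ 0 < B ∧ ∀ z ∈ W, ‖f z‖ ≤ A * exp (-B * ‖z‖ ^ (-k : ℝ))

lemma Real.exp_neg_le_factorial_div_pow_s11 {u : ℝ} (hu : 0 < u) (N : ℕ) :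
    exp (-u) ≤ N ! / u ^ N := by
  have h := pow_div_factorial_le_exp u hu.le N
  rw [div_le_iff₀ (by positivity)] at h
  rw [le_div_iff₀ (by positivity), exp_neg, inv_mul_le_iff₀ (exp_pos u)]
  linarith

lemma exp_neg_mul_rpow_neg_le {k B x : ℝ} (hk : 0 < k) (hB : 0 < B) (hx : 0 < x) (N : ℕ) :
    exp (-B * x ^ (-k)) ≤ ((k * B)⁻¹ ^ (1 / k)) ^ N * (N ! : ℝ) ^ (1 / k) * x ^ N := by
  set u := k * B * x ^ (-k) with hu_def
  have hu : 0 < u := by positivity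
  have hu_root : u ^ (1 / k) = (k * B) ^ (1 / k) * x⁻¹ := by
    rw [hu_def, mul_rpow (by positivity) (by positivity), ← rpow_mul hx.le,
      show -k * (1 / k) = -1 by field_simp, rpow_neg_one]
  calc exp (-B * x ^ (-k)) = exp (-u) ^ (1 / k) := by
        rw [← exp_mul, hu_def]; congr 1; field_simp
    _ ≤ (N ! / u ^ N) ^ (1 / k) :=
        rpow_le_rpow (exp_pos _).le (exp_neg_le_factorial_div_pow_s11 hu N) (by positivity)
    _ = ((k * B)⁻¹ ^ (1 / k)) ^ N * (N ! : ℝ) ^ (1 / k) * x ^ N := by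
        rw [div_rpow (by positivity) (by positivity), ← rpow_pow_comm hu.le, hu_root,
          inv_rpow (by positivity), div_eq_mul_inv, ← inv_pow, mul_inv, inv_inv, mul_pow]
        ring

lemma factorial_rpow_le_rpow_pow {s t : ℝ} (hs : 0 ≤ s) {N : ℕ} (hN : (N : ℝ) ≤ t) :
    (N ! : ℝ) ^ s ≤ (t ^ s) ^ N := by
  have h : (N ! : ℝ) ≤ t ^ N :=
    calc (N ! : ℝ) ≤ (N : ℝ) ^ N := by exact_mod_cast Nat.factorial_le_pow N
      _ ≤ t ^ N := pow_le_pow_left₀ N.cast_nonneg hN N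
  rw [rpow_pow_comm (N.cast_nonneg.trans hN)]
  exact rpow_le_rpow (by positivity) h hs

lemma inv_two_pow_floor_le (t : ℝ) :
    (2 : ℝ)⁻¹ ^ ⌊t⌋₊ ≤ 2 * exp (-log 2 * t) := by
  have hfloor : t - 1 < ⌊t⌋₊ := by linarith [Nat.lt_floor_add_one t]
  calc (2 : ℝ)⁻¹ ^ ⌊t⌋₊ = exp (-log 2 * ⌊t⌋₊) := by
        rw [mul_comm, exp_nat_mul, exp_neg, exp_log two_pos]
    _ ≤ exp (log 2 + -log 2 * t) := exp_le_exp.mpr (by nlinarith [log_pos one_lt_two])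
    _ = 2 * exp (-log 2 * t) := by rw [exp_add, exp_log two_pos]

lemma le_two_mul_exp_of_forall_le_gevrey {k A x y : ℝ} (hk : 0 < k) (hA : 0 < A)
    (hx : 0 < x) (hAx : 2 * A * x ≤ 1)
    (h : ∀ N : ℕ, 1 ≤ N → y ≤ A ^ N * (N ! : ℝ) ^ (1 / k) * x ^ N) :
    y ≤ 2 * exp (-(log 2 * (2 * A) ^ (-k)) * x ^ (-k)) := by
  set t := (2 * A * x) ^ (-k) with ht_def
  have ht : 1 ≤ t := one_le_rpow_of_pos_of_le_one_of_nonpos (by positivity) hAx (by linarith)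
  have hN : 1 ≤ ⌊t⌋₊ := Nat.le_floor (by exact_mod_cast ht)
  have ht_root : t ^ (1 / k) = (2 * A * x)⁻¹ := by
    rw [ht_def, ← rpow_mul (by positivity), show -k * (1 / k) = -1 by field_simp, rpow_neg_one]
  calc y ≤ A ^ ⌊t⌋₊ * (⌊t⌋₊ ! : ℝ) ^ (1 / k) * x ^ ⌊t⌋₊ := h _ hN
    _ ≤ A ^ ⌊t⌋₊ * (t ^ (1 / k)) ^ ⌊t⌋₊ * x ^ ⌊t⌋₊ := by
        gcongr
        exact factorial_rpow_le_rpow_pow (by positivity) (Nat.floor_le (by linarith))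
    _ = (2 : ℝ)⁻¹ ^ ⌊t⌋₊ := by
        rw [ht_root, ← mul_pow, ← mul_pow]
        congr 1
        field_simp
    _ ≤ 2 * exp (-log 2 * t) := inv_two_pow_floor_le t
    _ = 2 * exp (-(log 2 * (2 * A) ^ (-k)) * x ^ (-k)) := by
        rw [ht_def, mul_rpow (by positivity) hx.le]
        ring_nf

lemma HasExpDecayOn.isGevreyFlatOn {k : ℝ} {f : ℂ → ℂ} {W : Set ℂ} (hk : 0 < k)
    (hW : (0 : ℂ) ∉ W) (hf : HasExpDecayOn k f W) : IsGevreyFlatOn k f W := by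
  obtain ⟨A, B, hA, hB, hdecay⟩ := hf
  set q := (k * B)⁻¹ ^ (1 / k)
  have hq : 0 < q := by positivity
  refine ⟨max A 1 * q, 1, by positivity, one_pos, fun N hN z hz _ => ?_⟩
  have hz0 : 0 < ‖z‖ := norm_pos_iff.mpr (ne_of_mem_of_not_mem hz hW)
  have hA_le : A ≤ max A 1 ^ N :=
    (le_max_left A 1).trans (le_self_pow₀ (le_max_right A 1) (by omega))
  calc ‖f z‖ ≤ A * exp (-B * ‖z‖ ^ (-k)) := hdecay z hz
    _ ≤ A * (q ^ N * (N ! : ℝ) ^ (1 / k) * ‖z‖ ^ N) := by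
        gcongr
        exact exp_neg_mul_rpow_neg_le hk hB hz0 N
    _ ≤ max A 1 ^ N * (q ^ N * (N ! : ℝ) ^ (1 / k) * ‖z‖ ^ N) := by gcongr
    _ = (max A 1 * q) ^ N * (N ! : ℝ) ^ (1 / k) * ‖z‖ ^ N := by ring

lemma IsGevreyFlatOn.hasExpDecayOn {k : ℝ} {f : ℂ → ℂ} {W : Set ℂ} (hk : 0 < k)
    (hW : (0 : ℂ) ∉ W) (hbdd : ∀ c > 0, ∃ M, ∀ z ∈ W, c ≤ ‖z‖ → ‖f z‖ ≤ M)
    (hf : IsGevreyFlatOn k f W) : HasExpDecayOn k f W := by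
  obtain ⟨A, c₀, hA, hc₀, hgevrey⟩ := hf
  set c := min c₀ (2 * A)⁻¹
  have hc : 0 < c := lt_min hc₀ (by positivity)
  set B := log 2 * (2 * A) ^ (-k)
  have hB : 0 < B := mul_pos (log_pos one_lt_two) (by positivity)
  obtain ⟨M, hM⟩ := hbdd c hc
  refine ⟨max 2 (M * exp (B * c ^ (-k))), B, by positivity, hB, fun z hz => ?_⟩
  have hz0 : 0 < ‖z‖ := norm_pos_iff.mpr (ne_of_mem_of_not_mem hz hW)
  rcases le_total ‖z‖ c with hzc | hcz
  · have hAz : 2 * A * ‖z‖ ≤ 1 := by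
      rw [mul_comm, ← le_div_iff₀ (by positivity), one_div]
      exact hzc.trans (min_le_right _ _)
    calc ‖f z‖ ≤ 2 * exp (-B * ‖z‖ ^ (-k)) :=
          le_two_mul_exp_of_forall_le_gevrey hk hA hz0 hAz
            fun N hN => hgevrey N hN z hz (hzc.trans (min_le_left _ _))
      _ ≤ max 2 (M * exp (B * c ^ (-k))) * exp (-B * ‖z‖ ^ (-k)) := by
          gcongr
          exact le_max_left _ _
  · have hMz := hM z hz hcz
    have hM0 : 0 ≤ M := (norm_nonneg _).trans hMz
    calc ‖f z‖ ≤ M * exp (B * c ^ (-k)) * exp (-B * c ^ (-k)) := by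
          rwa [mul_assoc, ← exp_add, neg_mul, add_neg_cancel, exp_zero, mul_one]
      _ ≤ max 2 (M * exp (B * c ^ (-k))) * exp (-B * ‖z‖ ^ (-k)) := by
          refine mul_le_mul (le_max_right _ _) (exp_le_exp.mpr ?_) (exp_pos _).le
            (by positivity)
          rw [neg_mul, neg_mul, neg_le_neg_iff]
          exact mul_le_mul_of_nonneg_left (rpow_le_rpow_of_nonpos hc hcz (by linarith)) hB.le

lemma norm_ofReal_mul_exp_mul_I {r : ℝ} (hr : 0 ≤ r) (θ : ℝ) :
    ‖(r : ℂ) * Complex.exp (θ * Complex.I)‖ = r := by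
  rw [norm_mul, Complex.norm_exp_ofReal_mul_I, mul_one, Complex.norm_of_nonneg hr]

lemma zero_notMem_closedSubsector (a' b' ρ' : ℝ) : (0 : ℂ) ∉ ClosedSubsector a' b' ρ' := by
  rintro ⟨r, θ, hr, -, -, -, h⟩
  have := congrArg norm h
  rw [norm_zero, norm_ofReal_mul_exp_mul_I hr.le] at this
  exact hr.ne this

/-- Away from the vertex, a closed subsector lies in a compact subset of the open sector. -/
lemma ContinuousOn.exists_bound_closedSubsector {a a' b b' ρ ρ' : ℝ} {f : ℂ → ℂ}
    (hf : ContinuousOn f (Sector a b ρ)) (ha : a < a') (hb : b' < b) (hρ : ρ' < ρ)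
    {c : ℝ} (hc : 0 < c) :
    ∃ M, ∀ z ∈ ClosedSubsector a' b' ρ', c ≤ ‖z‖ → ‖f z‖ ≤ M := by
  let polar : ℝ × ℝ → ℂ := fun p => (p.1 : ℂ) * Complex.exp (p.2 * Complex.I)
  have hK : IsCompact (polar '' (Set.Icc c ρ' ×ˢ Set.Icc a' b')) :=
    (isCompact_Icc.prod isCompact_Icc).image (by fun_prop)
  have hK_sub : polar '' (Set.Icc c ρ' ×ˢ Set.Icc a' b') ⊆ Sector a b ρ := by
    rintro _ ⟨⟨r, θ⟩, ⟨⟨hcr, hrρ⟩, haθ, hθb⟩, rfl⟩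
    exact ⟨r, θ, hc.trans_le hcr, hrρ.trans_lt hρ, ha.trans_le haθ, hθb.trans_lt hb, rfl⟩
  obtain ⟨M, hM⟩ := hK.exists_bound_of_continuousOn (hf.mono hK_sub)
  refine ⟨M, ?_⟩
  rintro _ ⟨r, θ, hr, hrρ, haθ, hθb, rfl⟩ hcr
  rw [norm_ofReal_mul_exp_mul_I hr.le] at hcr
  exact hM _ ⟨(r, θ), ⟨⟨hcr, hrρ⟩, haθ, hθb⟩, rfl⟩

theorem gevrey_flat_iff_exponential_decay_general
    (k : ℝ) (hk : 0 < k) (a b ρ : ℝ)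
    (f : ℂ → ℂ) (hf : AnalyticOnNhd ℂ f (Sector a b ρ)) :
    (∀ a' b' ρ' : ℝ, a < a' → a' ≤ b' → b' < b → 0 < ρ' → ρ' < ρ →
      ∃ A c₀ : ℝ, 0 < A ∧ 0 < c₀ ∧
        ∀ N : ℕ, 1 ≤ N → ∀ z ∈ ClosedSubsector a' b' ρ', ‖z‖ ≤ c₀ →
          ‖f z‖ ≤ A ^ N * (N.factorial : ℝ) ^ ((1 : ℝ) / k) * ‖z‖ ^ N)
    ↔
    (∀ a' b' ρ' : ℝ, a < a' → a' ≤ b' → b' < b → 0 < ρ' → ρ' < ρ →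
      ∃ A B : ℝ, 0 < A ∧ 0 < B ∧ ∀ z ∈ ClosedSubsector a' b' ρ',
        ‖f z‖ ≤ A * Real.exp (-B * ‖z‖ ^ (-k : ℝ))) := by
  constructor
  · intro hgevrey a' b' ρ' ha hab hb hρ' hρ
    exact IsGevreyFlatOn.hasExpDecayOn hk (zero_notMem_closedSubsector a' b' ρ')
      (fun _ hc => hf.continuousOn.exists_bound_closedSubsector ha hb hρ hc)
      (hgevrey a' b' ρ' ha hab hb hρ' hρ)
  · intro hdecay a' b' ρ' ha hab hb hρ' hρ
    exact HasExpDecayOn.isGevreyFlatOn hk (zero_notMem_closedSubsector a' b' ρ')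
      (hdecay a' b' ρ' ha hab hb hρ' hρ)

/-- A function analytic on a sector is Gevrey of order `k` with asymptotic expansion
`0` if and only if, on every closed subsector, it decays like `A·exp(−B|z|^{−k})`. -/
theorem gevrey_flat_iff_exponential_decay
    (k : ℝ) (hk : 0 < k) (a b ρ : ℝ) (hab : a < b) (hρ : 0 < ρ)
    (f : ℂ → ℂ) (hf : AnalyticOnNhd ℂ f (Sector a b ρ)) :
    (∀ a' b' ρ' : ℝ, a < a' → a' ≤ b' → b' < b → 0 < ρ' → ρ' < ρ →
      ∃ A c₀ : ℝ, 0 < A ∧ 0 < c₀ ∧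
        ∀ N : ℕ, 1 ≤ N → ∀ z ∈ ClosedSubsector a' b' ρ', ‖z‖ ≤ c₀ →
          ‖f z‖ ≤ A ^ N * (N.factorial : ℝ) ^ ((1 : ℝ) / k) * ‖z‖ ^ N)
    ↔
    (∀ a' b' ρ' : ℝ, a < a' → a' ≤ b' → b' < b → 0 < ρ' → ρ' < ρ →
      ∃ A B : ℝ, 0 < A ∧ 0 < B ∧ ∀ z ∈ ClosedSubsector a' b' ρ',
        ‖f z‖ ≤ A * Real.exp (-B * ‖z‖ ^ (-k : ℝ))) :=
  gevrey_flat_iff_exponential_decay_general k hk a b ρ f hf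
end

section
/- Define f : (0,∞) → ℝ by f(x) = ∫₀^∞ e^{−ζ/x}/(1+ζ) dζ. Then f is differentiable on (0,∞), satisfies the Euler equation x²·f′(x) + f(x) = x for all x > 0, and has the divergent series ∑_{n≥0} (−1)ⁿ·n!·x^{n+1} as asymptotic expansion at 0⁺: for every N ≥ 0 there is a constant C_N with |f(x) − ∑_{n≤N−1} (−1)ⁿ·n!·x^{n+1}| ≤ C_N·x^{N+1} for all 0 < x ≤ 1. -/
/-!
Write `M n x = ∫₀^∞ ζⁿ e^{-ζ/x} / (1 + ζ) dζ`. Since `ζⁿ/(1+ζ) + ζⁿ⁺¹/(1+ζ) = ζⁿ` and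
`∫₀^∞ ζⁿ e^{-ζ/x} dζ = n! xⁿ⁺¹`, the moments satisfy `M n x + M (n+1) x = n! xⁿ⁺¹`.
Differentiating under the integral sign gives `x² ∂ₓM n x = M (n+1) x`, so the case `n = 0` of
the recurrence is the Euler equation for `f = M 0`. Iterating the recurrence identifies the
remainder of the asymptotic series after `N` terms with `(-1)ᴺ M N x`, and positivity of
`M (N+1) x` bounds it by `N! xᴺ⁺¹`.
-/

open MeasureTheory Real Set Filter
open scoped Nat

namespace EulerBorel

theorem integrableOn_pow_mul_exp_neg_div (n : ℕ) {x : ℝ} (hx : 0 < x) :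
    IntegrableOn (fun ζ : ℝ => ζ ^ n * exp (-ζ / x)) (Ioi 0) := by
  have h := integrableOn_rpow_mul_exp_neg_mul_rpow (s := n) (p := 1) (b := 1 / x)
    (by linarith [n.cast_nonneg (α := ℝ)]) one_pos (by positivity)
  refine h.congr_fun (fun ζ _ => ?_) measurableSet_Ioi
  simp only [rpow_natCast, rpow_one]
  ring_nf

theorem integral_pow_mul_exp_neg_div (n : ℕ) {x : ℝ} (hx : 0 < x) :
    ∫ ζ in Ioi (0 : ℝ), ζ ^ n * exp (-ζ / x) = n ! * x ^ (n + 1) := by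
  have h := integral_rpow_mul_exp_neg_mul_Ioi (a := n + 1) (r := 1 / x) (by positivity)
    (by positivity)
  rw [add_sub_cancel_right, Gamma_nat_eq_factorial, one_div_one_div,
    ← Nat.cast_add_one, rpow_natCast] at h
  rw [mul_comm, ← h]
  refine setIntegral_congr_fun measurableSet_Ioi fun ζ _ => ?_
  simp only [rpow_natCast]
  ring_nf

noncomputable def eulerMoment (n : ℕ) (x : ℝ) : ℝ :=
  ∫ ζ in Ioi (0 : ℝ), ζ ^ n * exp (-ζ / x) / (1 + ζ)

theorem integrableOn_eulerMoment_integrand (n : ℕ) {x : ℝ} (hx : 0 < x) :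
    IntegrableOn (fun ζ : ℝ => ζ ^ n * exp (-ζ / x) / (1 + ζ)) (Ioi 0) := by
  refine (integrableOn_pow_mul_exp_neg_div n hx).mono'
    (Measurable.aestronglyMeasurable (by fun_prop)) ?_
  filter_upwards [ae_restrict_mem measurableSet_Ioi] with ζ (hζ : 0 < ζ)
  rw [norm_of_nonneg (by positivity)]
  exact div_le_self (by positivity) (by linarith)

theorem eulerMoment_nonneg (n : ℕ) (x : ℝ) : 0 ≤ eulerMoment n x :=
  setIntegral_nonneg measurableSet_Ioi fun ζ (hζ : 0 < ζ) => by positivity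

theorem eulerMoment_add_eulerMoment_succ (n : ℕ) {x : ℝ} (hx : 0 < x) :
    eulerMoment n x + eulerMoment (n + 1) x = n ! * x ^ (n + 1) := by
  rw [eulerMoment, eulerMoment, ← integral_add (integrableOn_eulerMoment_integrand n hx)
    (integrableOn_eulerMoment_integrand (n + 1) hx), ← integral_pow_mul_exp_neg_div n hx]
  refine setIntegral_congr_fun measurableSet_Ioi fun ζ (hζ : 0 < ζ) => ?_
  field_simp
  ring

theorem eulerMoment_le (n : ℕ) {x : ℝ} (hx : 0 < x) : eulerMoment n x ≤ n ! * x ^ (n + 1) := by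
  linarith [eulerMoment_add_eulerMoment_succ n hx, eulerMoment_nonneg (n + 1) x]

theorem eulerMoment_zero_sub_sum (N : ℕ) {x : ℝ} (hx : 0 < x) :
    eulerMoment 0 x - ∑ n ∈ Finset.range N, (-1 : ℝ) ^ n * n ! * x ^ (n + 1) =
      (-1) ^ N * eulerMoment N x := by
  induction N with
  | zero => simp
  | succ N ih =>
    rw [Finset.sum_range_succ, ← sub_sub, ih]
    linear_combination (-1) ^ N * eulerMoment_add_eulerMoment_succ N hx

theorem hasDerivAt_eulerMoment_integrand (n : ℕ) (ζ : ℝ) {y : ℝ} (hy : y ≠ 0) :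
    HasDerivAt (fun y => ζ ^ n * exp (-ζ / y) / (1 + ζ))
      (ζ ^ (n + 1) * exp (-ζ / y) / (1 + ζ) / y ^ 2) y := by
  have hinv : HasDerivAt (fun y => -ζ / y) (ζ / y ^ 2) y := by
    simpa [div_eq_mul_inv, neg_mul, mul_neg] using (hasDerivAt_inv hy).const_mul (-ζ)
  refine ((hinv.exp.const_mul (ζ ^ n)).div_const (1 + ζ)).congr_deriv ?_
  ring

theorem norm_eulerMoment_deriv_integrand_le (n : ℕ) {x y ζ : ℝ} (hζ : 0 < ζ)
    (hy : y ∈ Metric.ball x (x / 2)) :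
    ‖ζ ^ (n + 1) * exp (-ζ / y) / (1 + ζ) / y ^ 2‖ ≤
      4 / x ^ 2 * (ζ ^ (n + 1) * exp (-ζ / (2 * x))) := by
  rw [Metric.mem_ball, dist_eq, abs_lt] at hy
  have hx : 0 < x := by linarith
  have hy0 : 0 < y := by linarith
  have hexp : exp (-ζ / y) ≤ exp (-ζ / (2 * x)) := by
    rw [exp_le_exp, neg_div, neg_div, neg_le_neg_iff]
    exact div_le_div_of_nonneg_left hζ.le hy0 (by linarith)
  rw [norm_of_nonneg (by positivity)]
  calc ζ ^ (n + 1) * exp (-ζ / y) / (1 + ζ) / y ^ 2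
      ≤ ζ ^ (n + 1) * exp (-ζ / (2 * x)) / 1 / (x / 2) ^ 2 := by
        gcongr
        · linarith
        · linarith
    _ = 4 / x ^ 2 * (ζ ^ (n + 1) * exp (-ζ / (2 * x))) := by ring

theorem hasDerivAt_eulerMoment (n : ℕ) {x : ℝ} (hx : 0 < x) :
    HasDerivAt (eulerMoment n) (eulerMoment (n + 1) x / x ^ 2) x := by
  have hball : ∀ y ∈ Metric.ball x (x / 2), y ≠ 0 := fun y hy => by
    rw [Metric.mem_ball, dist_eq, abs_lt] at hy
    linarith
  have key := hasDerivAt_integral_of_dominated_loc_of_deriv_le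
    (μ := volume.restrict (Ioi 0)) (Metric.ball_mem_nhds x (half_pos hx))
    (F := fun y ζ => ζ ^ n * exp (-ζ / y) / (1 + ζ))
    (F' := fun y ζ => ζ ^ (n + 1) * exp (-ζ / y) / (1 + ζ) / y ^ 2)
    (Eventually.of_forall fun y => Measurable.aestronglyMeasurable (by fun_prop))
    (integrableOn_eulerMoment_integrand n hx) (Measurable.aestronglyMeasurable (by fun_prop))
    ((ae_restrict_mem measurableSet_Ioi).mono fun ζ hζ y hy =>
      norm_eulerMoment_deriv_integrand_le n hζ hy)
    ((integrableOn_pow_mul_exp_neg_div (n + 1) (by positivity : 0 < 2 * x)).const_mul _)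
    (Eventually.of_forall fun ζ y hy => hasDerivAt_eulerMoment_integrand n ζ (hball y hy))
  rw [eulerMoment, ← integral_div]
  exact key.2

end EulerBorel

open EulerBorel in
/-- The Borel–Laplace sum `f(x) = ∫₀^∞ e^{−ζ/x}/(1+ζ) dζ` is differentiable on
`(0,∞)`, satisfies the Euler equation `x²f′(x) + f(x) = x` there, and has the
divergent series `∑ (−1)ⁿ n! x^{n+1}` as asymptotic expansion at `0⁺`. -/
theorem euler_equation_borel_sum
    (f : ℝ → ℝ)
    (hf : ∀ x : ℝ, f x = ∫ ζ in Set.Ioi (0 : ℝ), Real.exp (-ζ / x) / (1 + ζ)) :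
    (∀ x : ℝ, 0 < x → DifferentiableAt ℝ f x) ∧
    (∀ x : ℝ, 0 < x → x ^ 2 * deriv f x + f x = x) ∧
    (∀ N : ℕ, ∃ C : ℝ, ∀ x : ℝ, 0 < x → x ≤ 1 →
      |f x - ∑ n ∈ Finset.range N, (-1 : ℝ) ^ n * (n.factorial : ℝ) * x ^ (n + 1)| ≤
        C * x ^ (N + 1)) := by
  obtain rfl : f = eulerMoment 0 := funext fun x => by simp [hf, eulerMoment]
  refine ⟨fun x hx => (hasDerivAt_eulerMoment 0 hx).differentiableAt, fun x hx => ?_,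
    fun N => ⟨N !, fun x hx _ => ?_⟩⟩
  · rw [(hasDerivAt_eulerMoment 0 hx).deriv, mul_div_cancel₀ _ (by positivity), add_comm,
      eulerMoment_add_eulerMoment_succ 0 hx]
    simp
  · rw [eulerMoment_zero_sub_sum N hx, abs_mul, abs_pow, abs_neg, abs_one, one_pow, one_mul,
      abs_of_nonneg (eulerMoment_nonneg N x)]
    exact eulerMoment_le N hx
end

section
/- The function sec = 1/cos does not satisfy any nonzero homogeneous linear differential equation with rational function coefficients: there do not exist n ≥ 0 and polynomials a₀, …, aₙ ∈ ℂ[x] with aₙ ≠ 0 such that ∑_{i=0}^{n} aᵢ(z)·(d^i/dz^i)(1/cos)(z) = 0 for all z in the open unit disk {z ∈ ℂ : |z| < 1}. -/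
/-!
Write `sec⁽ⁱ⁾ = Qᵢ / cos^(i+1)` with entire numerators given by
`Q₀ = 1`, `Qᵢ₊₁ = cos · Qᵢ' + (i+1) sin · Qᵢ`; at a zero of `cos` this recursion gives
`Qᵢ = i! sinⁱ ≠ 0`. Multiplying `∑ aᵢ sec⁽ⁱ⁾ = 0` by `cos^(n+1)` yields the entire function
`∑ aᵢ cos^(n-i) Qᵢ`, which vanishes on the unit disk and hence, by the identity theorem, on all
of `ℂ`. At a zero of `cos` only the top term survives, so `aₙ` vanishes at the infinitely many
zeros `(2k+1)π/2` of `cos`, forcing `aₙ = 0`.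
-/

open Complex Polynomial Finset
open scoped Real Nat Topology

noncomputable def secNumerator : ℕ → ℂ → ℂ
  | 0 => fun _ => 1
  | i + 1 => fun z => cos z * deriv (secNumerator i) z + (i + 1) * sin z * secNumerator i z

@[fun_prop]
theorem differentiable_secNumerator (i : ℕ) : Differentiable ℂ (secNumerator i) := by
  induction i with
  | zero => exact differentiable_const 1
  | succ i ih =>
    exact (differentiable_cos.mul ih.deriv).add
      (((differentiable_const _).mul differentiable_sin).mul ih)

theorem iteratedDeriv_sec {z : ℂ} (hz : cos z ≠ 0) (i : ℕ) :
    iteratedDeriv i (fun w => 1 / cos w) z = secNumerator i z / cos z ^ (i + 1) := by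
  induction i generalizing z with
  | zero => simp [secNumerator]
  | succ i ih =>
    have h𝓝 : {w | cos w ≠ 0} ∈ 𝓝 z :=
      (isOpen_ne_fun continuous_cos continuous_const).mem_nhds hz
    have hpow : HasDerivAt (fun w => cos w ^ (i + 1)) ((i + 1 : ℕ) * cos z ^ i * -sin z) z :=
      (hasDerivAt_cos z).fun_pow (i + 1)
    rw [iteratedDeriv_succ, Filter.EventuallyEq.deriv_eq (Filter.mem_of_superset h𝓝
        fun w hw => ih hw), deriv_fun_div (differentiable_secNumerator i z)
        hpow.differentiableAt (pow_ne_zero _ hz), hpow.deriv]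
    simp only [secNumerator]
    field_simp
    push_cast
    ring

theorem secNumerator_of_cos_eq_zero {z : ℂ} (hz : cos z = 0) (i : ℕ) :
    secNumerator i z = i ! * sin z ^ i := by
  induction i with
  | zero => simp [secNumerator]
  | succ i ih =>
    simp only [secNumerator, hz, ih, Nat.factorial_succ]
    push_cast
    ring

theorem cos_ne_zero_of_norm_lt_pi_div_two {z : ℂ} (hz : ‖z‖ < π / 2) : cos z ≠ 0 := by
  refine cos_ne_zero_iff.mpr fun k hk => hz.not_ge ?_
  have hodd : (1 : ℝ) ≤ |(2 * k + 1 : ℤ)| := by exact_mod_cast Int.one_le_abs (by omega)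
  have hnorm : ‖z‖ = |(2 * k + 1 : ℤ)| * (π / 2) := by
    rw [hk, show (2 * (k : ℂ) + 1) * π / 2 = ((2 * k + 1 : ℤ) : ℂ) * ((π / 2 : ℝ) : ℂ) by
      push_cast; ring, norm_mul, norm_intCast, norm_real, Real.norm_of_nonneg (by positivity),
      Int.cast_abs]
  rw [hnorm]
  exact le_mul_of_one_le_left (by positivity) hodd

theorem infinite_setOf_cos_eq_zero : {z : ℂ | cos z = 0}.Infinite := by
  refine (Set.infinite_range_of_injective fun k l hkl => ?_).mono
    (Set.range_subset_iff.mpr fun k => cos_eq_zero_iff.mpr ⟨k, rfl⟩)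
  have : (2 * (k : ℂ) + 1) * π = (2 * l + 1) * π := by linear_combination 2 * hkl
  have := mul_right_cancel₀ (ofReal_ne_zero.mpr Real.pi_ne_zero) this
  exact_mod_cast (by linear_combination this / 2 : (k : ℂ) = l)

noncomputable def clearedSecOperator (n : ℕ) (a : ℕ → ℂ[X]) (z : ℂ) : ℂ :=
  ∑ i ∈ range (n + 1), (a i).eval z * cos z ^ (n - i) * secNumerator i z

theorem differentiable_clearedSecOperator (n : ℕ) (a : ℕ → ℂ[X]) :
    Differentiable ℂ (clearedSecOperator n a) := by
  unfold clearedSecOperator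
  fun_prop

theorem clearedSecOperator_eq {z : ℂ} (hz : cos z ≠ 0) (n : ℕ) (a : ℕ → ℂ[X]) :
    clearedSecOperator n a z = cos z ^ (n + 1) *
      ∑ i ∈ range (n + 1), (a i).eval z * iteratedDeriv i (fun w => 1 / cos w) z := by
  rw [clearedSecOperator, mul_sum]
  refine sum_congr rfl fun i hi => ?_
  have hpow : cos z ^ (n + 1) = cos z ^ (n - i) * cos z ^ (i + 1) := by
    rw [← pow_add]; congr 1; have := mem_range.mp hi; omega
  rw [iteratedDeriv_sec hz, hpow]
  field_simp

theorem clearedSecOperator_of_cos_eq_zero {z : ℂ} (hz : cos z = 0) (n : ℕ) (a : ℕ → ℂ[X]) :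
    clearedSecOperator n a z = (a n).eval z * (n ! * sin z ^ n) := by
  rw [clearedSecOperator, sum_range_succ, sum_eq_zero fun i hi => ?_, Nat.sub_self,
    secNumerator_of_cos_eq_zero hz]
  · ring
  · rw [hz, zero_pow (by have := mem_range.mp hi; omega), mul_zero, zero_mul]

/-- `sec = 1/cos` satisfies no nonzero homogeneous linear differential equation with
polynomial (equivalently, rational function) coefficients on the open unit disk. -/
theorem sec_satisfies_no_linear_ode :
    ¬ ∃ (n : ℕ) (a : ℕ → Polynomial ℂ), a n ≠ 0 ∧
      ∀ z : ℂ, ‖z‖ < 1 →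
        ∑ i ∈ Finset.range (n + 1),
          (a i).eval z * iteratedDeriv i (fun w => 1 / Complex.cos w) z = 0 := by
  rintro ⟨n, a, han, hsum⟩
  have hdisk : clearedSecOperator n a =ᶠ[𝓝 0] 0 := by
    filter_upwards [Metric.ball_mem_nhds (0 : ℂ) one_pos] with z hz
    have hz : ‖z‖ < 1 := mem_ball_zero_iff.mp hz
    have hcos := cos_ne_zero_of_norm_lt_pi_div_two (hz.trans (by linarith [Real.pi_gt_three]))
    rw [clearedSecOperator_eq hcos, hsum z hz, mul_zero, Pi.zero_apply]
  have hzero : clearedSecOperator n a = 0 :=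
    AnalyticOnNhd.eq_of_eventuallyEq
      (fun z _ => (differentiable_clearedSecOperator n a).analyticAt z) analyticOnNhd_const hdisk
  refine han (eq_zero_of_infinite_isRoot _ (infinite_setOf_cos_eq_zero.mono fun z hz => ?_))
  have hsin : sin z ≠ 0 := by
    rcases cos_eq_zero_iff_sin_eq.mp hz with h | h <;> simp [h]
  have := congrFun hzero z
  rw [clearedSecOperator_of_cos_eq_zero hz] at this
  exact (mul_eq_zero.mp this).resolve_right
    (mul_ne_zero (Nat.cast_ne_zero.mpr n.factorial_ne_zero) (pow_ne_zero n hsin))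
end
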